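/- arXiv:1804.08418 — 7 statements merged into one kernel-verified Lean document; each statement's English description precedes it below -/
import Mathlib

section
/- Let Φ : ℝ^n ⇉ ℝ^m be a polyhedral sublinear mapping and 𝓛 ⊆ ℝ^m a linear subspace. If H(Φ|𝓛) > 0, then there exist b ∈ Im(Φ) and u ∈ dom(Φ) such that 0 < dist_𝓛(b, Φ(u)) < ∞ and dist(u, Φ⁻¹(b)) = H(Φ|𝓛) · dist_𝓛(b, Φ(u)). -/
/-- The graph of a set-valued mapping. -/
def svGraph {n m : ℕ} (Φ : (Fin n → ℝ) → Set (Fin m → ℝ)) :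
    Set ((Fin n → ℝ) × (Fin m → ℝ)) :=
  {p | p.2 ∈ Φ p.1}

/-- A polyhedral cone: an intersection of finitely many closed halfspaces through
the origin. -/
def IsPolyhedralCone {E : Type*} [AddCommGroup E] [Module ℝ E] (K : Set E) : Prop :=
  ∃ (k : ℕ) (f : Fin k → (E →ₗ[ℝ] ℝ)), K = {x | ∀ i, 0 ≤ f i x}

/-- The tangent cone to `K` at `p`: `{z | p + t • z ∈ K for some t > 0}`. -/
def tangConeAt {E : Type*} [AddCommGroup E] [Module ℝ E] (K : Set E) (p : E) : Set E :=
  {z | ∃ t : ℝ, 0 < t ∧ p + t • z ∈ K}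

/-- The collection `𝓣(K)` of tangent cones to `K` at its points. -/
def tangentCones {E : Type*} [AddCommGroup E] [Module ℝ E] (K : Set E) : Set (Set E) :=
  {T | ∃ p ∈ K, T = tangConeAt K p}

/-- The set-valued mapping `Φ_T` with graph `T` is relatively surjective:
its image is a linear subspace. -/
def RelSurjGraph {n m : ℕ} (T : Set ((Fin n → ℝ) × (Fin m → ℝ))) : Prop :=
  ∃ W : Submodule ℝ (Fin m → ℝ), {y | ∃ x, (x, y) ∈ T} = (W : Set (Fin m → ℝ))

/-- `‖Φ_T⁻¹ | 𝓛‖ = max_{y ∈ Im(Φ_T) ∩ 𝓛, ‖y‖ ≤ 1} min_{x ∈ Φ_T⁻¹(y)} ‖x‖`. -/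
noncomputable def nrmInvRes {n m : ℕ} (T : Set ((Fin n → ℝ) × (Fin m → ℝ)))
    (L : Submodule ℝ (Fin m → ℝ)) : ℝ :=
  sSup {t | ∃ y : Fin m → ℝ, (∃ x, (x, y) ∈ T) ∧ y ∈ L ∧ ‖y‖ ≤ 1 ∧
    t = sInf {r | ∃ x : Fin n → ℝ, (x, y) ∈ T ∧ r = ‖x‖}}

/-- The Hoffman constant `H(Φ|𝓛) = max_{T ∈ S(Φ)} ‖Φ_T⁻¹|𝓛‖`. -/
noncomputable def HoffSV {n m : ℕ} (Φ : (Fin n → ℝ) → Set (Fin m → ℝ))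
    (L : Submodule ℝ (Fin m → ℝ)) : ℝ :=
  sSup {t | ∃ T ∈ tangentCones (svGraph Φ), RelSurjGraph T ∧ t = nrmInvRes T L}

/-!
Since `graph Φ` is polyhedral it has finitely many tangent cones, so `H(Φ|𝓛) = ‖Φ_T⁻¹|𝓛‖` for
some `T ∈ S(Φ)`, the tangent cone of `graph Φ` at a point `p`. The least preimage norm of `Φ_T`
is sublinear on the subspace `Im(Φ_T)`, hence attains its maximum `H` over the unit ball of
`Im(Φ_T) ∩ 𝓛` at some `y₀`, with a least-norm preimage `x₀`, `‖x₀‖ = H`; maximality also forces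
`dist_𝓛(y₀, Φ_T(0)) = 1`. Pick `s > 0` with `p + s (x₀, y₀) ∈ graph Φ` and set `u = p₁`,
`b = p₂ + s y₀`. Since `graph Φ - p ⊆ T`, every competitor for `dist_𝓛(b, Φ(u))` or
`dist(u, Φ⁻¹(b))` rescales by `s⁻¹` to a competitor for the corresponding quantity of `Φ_T` at
`y₀`, giving `dist_𝓛(b, Φ(u)) = s` and `dist(u, Φ⁻¹(b)) = s H`.
-/

open Metric Filter Topology

section PolyhedralCone

variable {E : Type*} [AddCommGroup E] [Module ℝ E]

theorem sub_mem_tangConeAt {K : Set E} {p q : E} (hq : q ∈ K) : q - p ∈ tangConeAt K p :=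
  ⟨1, one_pos, by rwa [one_smul, add_sub_cancel]⟩

theorem smul_mem_tangConeAt {K : Set E} {p z : E} {c : ℝ} (hc : 0 < c)
    (hz : z ∈ tangConeAt K p) : c • z ∈ tangConeAt K p := by
  obtain ⟨t, ht, hK⟩ := hz
  exact ⟨t / c, div_pos ht hc, by rwa [smul_smul, div_mul_cancel₀ t hc.ne']⟩

/-- Inactive constraints stay satisfied along `p + t • z` for all small `t > 0`. -/
theorem tangConeAt_setOf_forall_nonneg {ι : Type*} [Finite ι] (f : ι → E →ₗ[ℝ] ℝ) {p : E}
    (hp : ∀ i, 0 ≤ f i p) :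
    tangConeAt {x | ∀ i, 0 ≤ f i x} p = {z | ∀ i, f i p = 0 → 0 ≤ f i z} := by
  ext z
  simp only [tangConeAt, Set.mem_ofPred_eq, map_add, map_smul, smul_eq_mul]
  constructor
  · rintro ⟨t, ht, h⟩ i hi
    have := h i
    rw [hi, zero_add] at this
    exact nonneg_of_mul_nonneg_right this ht
  · intro hz
    have hsmall : ∀ i, ∀ᶠ t in 𝓝[>] (0 : ℝ), 0 ≤ f i p + t * f i z := by
      intro i
      rcases (hp i).eq_or_lt with h | h
      · filter_upwards [self_mem_nhdsWithin] with t ht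
        rw [← h, zero_add]
        exact mul_nonneg (le_of_lt ht) (hz i h.symm)
      · have hlim : Tendsto (fun t : ℝ => f i p + t * f i z) (𝓝 0) (𝓝 (f i p)) :=
          (by fun_prop : Continuous fun t : ℝ => f i p + t * f i z).tendsto' 0 _ (by simp)
        exact (hlim.eventually (eventually_ge_nhds h)).filter_mono nhdsWithin_le_nhds
    obtain ⟨t, ht, ht0⟩ := ((eventually_all.2 hsmall).and self_mem_nhdsWithin).exists
    exact ⟨t, ht0, ht⟩

theorem IsPolyhedralCone.exists_pointedCone {K : Set E} (hK : IsPolyhedralCone K) :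
    ∃ C : PointedCone ℝ E, (C : Set E) = K := by
  obtain ⟨k, f, rfl⟩ := hK
  refine ⟨⨅ i, (PointedCone.positive ℝ ℝ).comap (f i), ?_⟩
  ext x
  simp

theorem IsPolyhedralCone.tangConeAt {K : Set E} (hK : IsPolyhedralCone K) {p : E}
    (hp : p ∈ K) : IsPolyhedralCone (tangConeAt K p) := by
  obtain ⟨k, f, rfl⟩ := hK
  refine ⟨k, fun i => if f i p = 0 then f i else 0, ?_⟩
  rw [tangConeAt_setOf_forall_nonneg f hp]
  ext z
  refine forall_congr' fun i => ?_
  dsimp only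
  split_ifs with h <;> simp [h]

theorem IsPolyhedralCone.finite_tangentCones {K : Set E} (hK : IsPolyhedralCone K) :
    (tangentCones K).Finite := by
  obtain ⟨k, f, rfl⟩ := hK
  refine (Set.finite_range fun I : Set (Fin k) => {z | ∀ i ∈ I, 0 ≤ f i z}).subset ?_
  rintro T ⟨p, hp, rfl⟩
  exact ⟨{i | f i p = 0}, (tangConeAt_setOf_forall_nonneg f hp).symm⟩

theorem IsPolyhedralCone.isClosed [TopologicalSpace E] [IsTopologicalAddGroup E]
    [ContinuousSMul ℝ E] [T2Space E] [FiniteDimensional ℝ E] {K : Set E}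
    (hK : IsPolyhedralCone K) : IsClosed K := by
  obtain ⟨k, f, rfl⟩ := hK
  rw [Set.ofPred_forall]
  exact isClosed_iInter fun i => isClosed_le continuous_const (f i).continuous_of_finiteDimensional

end PolyhedralCone

section MinPreimageNorm

variable {E F : Type*} [NormedAddCommGroup E]

/-- `min_{x ∈ Φ_T⁻¹(y)} ‖x‖`, which is `sInf ∅ = 0` when `y ∉ Im(Φ_T)`. -/
noncomputable def minPreimageNorm (T : Set (E × F)) (y : F) : ℝ :=
  sInf {r | ∃ x, (x, y) ∈ T ∧ r = ‖x‖}

theorem minPreimageNorm_le {T : Set (E × F)} {x : E} {y : F} (h : (x, y) ∈ T) :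
    minPreimageNorm T y ≤ ‖x‖ :=
  csInf_le ⟨0, by rintro r ⟨x, -, rfl⟩; exact norm_nonneg x⟩ ⟨x, h, rfl⟩

theorem le_minPreimageNorm {T : Set (E × F)} {y : F} (hy : ∃ x, (x, y) ∈ T) {c : ℝ}
    (h : ∀ x, (x, y) ∈ T → c ≤ ‖x‖) : c ≤ minPreimageNorm T y := by
  obtain ⟨x₀, hx₀⟩ := hy
  exact le_csInf ⟨‖x₀‖, x₀, hx₀, rfl⟩ (by rintro r ⟨x, hx, rfl⟩; exact h x hx)

theorem exists_norm_eq_minPreimageNorm [ProperSpace E] {T : Set (E × F)} {y : F}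
    (hy : ∃ x, (x, y) ∈ T) (hclosed : IsClosed {x | (x, y) ∈ T}) :
    ∃ x, (x, y) ∈ T ∧ ‖x‖ = minPreimageNorm T y := by
  obtain ⟨x, hx, hdist⟩ := hclosed.exists_infDist_eq_dist hy 0
  refine ⟨x, hx, le_antisymm ?_ (minPreimageNorm_le hx)⟩
  refine le_minPreimageNorm hy fun x' hx' => ?_
  rw [← dist_zero_left, ← hdist, ← dist_zero_left]
  exact infDist_le_dist_of_mem hx'

variable [NormedSpace ℝ E] [AddCommGroup F] [Module ℝ F]

theorem minPreimageNorm_smul_le (T : PointedCone ℝ (E × F)) {y : F} (hy : ∃ x, (x, y) ∈ T)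
    {c : ℝ} (hc : 0 < c) :
    minPreimageNorm (E := E) T (c • y) ≤ c * minPreimageNorm (E := E) T y := by
  rw [← div_le_iff₀' hc]
  refine le_minPreimageNorm hy fun x hx => ?_
  rw [div_le_iff₀' hc]
  calc _ ≤ ‖c • x‖ := minPreimageNorm_le (T.smul_mem hc.le hx)
    _ = c * ‖x‖ := by rw [norm_smul, Real.norm_of_nonneg hc.le]

theorem minPreimageNorm_add_le (T : PointedCone ℝ (E × F)) {y₁ y₂ : F}
    (hy₁ : ∃ x, (x, y₁) ∈ T) (hy₂ : ∃ x, (x, y₂) ∈ T) :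
    minPreimageNorm (E := E) T (y₁ + y₂) ≤
      minPreimageNorm (E := E) T y₁ + minPreimageNorm (E := E) T y₂ := by
  rw [← sub_le_iff_le_add]
  refine le_minPreimageNorm hy₁ fun x₁ hx₁ => ?_
  rw [sub_le_comm]
  refine le_minPreimageNorm hy₂ fun x₂ hx₂ => ?_
  rw [sub_le_iff_le_add']
  exact (minPreimageNorm_le (T.add_mem hx₁ hx₂)).trans (norm_add_le x₁ x₂)

theorem minPreimageNorm_le_sub (T : PointedCone ℝ (E × F)) {y w : F} (hw : (0, w) ∈ T)
    (hyw : ∃ x, (x, y - w) ∈ T) :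
    minPreimageNorm (E := E) T y ≤ minPreimageNorm (E := E) T (y - w) := by
  have hw0 : minPreimageNorm (E := E) T w ≤ 0 := by simpa using minPreimageNorm_le hw
  have := minPreimageNorm_add_le T hyw ⟨0, hw⟩
  rw [sub_add_cancel] at this
  linarith

end MinPreimageNorm

theorem one_le_norm_sub_of_minPreimageNorm_eq {E F : Type*} [NormedAddCommGroup E]
    [NormedSpace ℝ E] [NormedAddCommGroup F] [NormedSpace ℝ F] (T : PointedCone ℝ (E × F))
    {L : Submodule ℝ F} {H : ℝ} (hH : 0 < H)
    (hbound : ∀ y ∈ L, (∃ x, (x, y) ∈ T) → minPreimageNorm (E := E) T y ≤ H * ‖y‖)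
    {y w : F} (hy : minPreimageNorm (E := E) T y = H) (hw : (0, w) ∈ T)
    (hyw : ∃ x, (x, y - w) ∈ T) (hywL : y - w ∈ L) : 1 ≤ ‖y - w‖ := by
  have := (minPreimageNorm_le_sub T hw hyw).trans (hbound _ hywL hyw)
  rw [hy] at this
  exact le_of_mul_le_mul_left (by rwa [mul_one]) hH

section Sublinear

variable {F : Type*} [NormedAddCommGroup F] [NormedSpace ℝ F] {g : F → ℝ} {V : Submodule ℝ F}

theorem le_sSup_image_mul_norm (hsmul : ∀ c : ℝ, 0 < c → ∀ a ∈ V, g (c • a) ≤ c * g a)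
    (hbdd : BddAbove (g '' ((V : Set F) ∩ closedBall 0 1))) {y : F} (hy : y ∈ V) :
    g y ≤ sSup (g '' ((V : Set F) ∩ closedBall 0 1)) * ‖y‖ := by
  rcases eq_or_ne y 0 with rfl | hy0
  · have := hsmul 2⁻¹ (by norm_num) 0 V.zero_mem
    rw [smul_zero] at this
    rw [norm_zero, mul_zero]
    linarith
  · have hny : 0 < ‖y‖ := norm_pos_iff.2 hy0
    have hunit : ‖y‖⁻¹ • y ∈ (V : Set F) ∩ closedBall 0 1 := by
      refine ⟨V.smul_mem _ hy, mem_closedBall_zero_iff.2 ?_⟩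
      rw [norm_smul, norm_inv, norm_norm, inv_mul_cancel₀ hny.ne']
    calc g y = g (‖y‖ • ‖y‖⁻¹ • y) := by rw [smul_inv_smul₀ hny.ne']
      _ ≤ ‖y‖ * g (‖y‖⁻¹ • y) := hsmul _ hny _ (V.smul_mem _ hy)
      _ ≤ ‖y‖ * sSup (g '' ((V : Set F) ∩ closedBall 0 1)) :=
        mul_le_mul_of_nonneg_left (le_csSup hbdd ⟨_, hunit, rfl⟩) hny.le
      _ = sSup (g '' ((V : Set F) ∩ closedBall 0 1)) * ‖y‖ := mul_comm _ _

/-- Sublinearity makes `g` Lipschitz on `V`, and the unit ball of `V` is compact. -/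
theorem exists_eq_sSup_image [FiniteDimensional ℝ F]
    (hadd : ∀ a ∈ V, ∀ b ∈ V, g (a + b) ≤ g a + g b)
    (hsmul : ∀ c : ℝ, 0 < c → ∀ a ∈ V, g (c • a) ≤ c * g a)
    (hbdd : BddAbove (g '' ((V : Set F) ∩ closedBall 0 1))) :
    ∃ y ∈ (V : Set F) ∩ closedBall 0 1, g y = sSup (g '' ((V : Set F) ∩ closedBall 0 1)) := by
  set B := (V : Set F) ∩ closedBall 0 1
  have hcompact : IsCompact B := (isCompact_closedBall 0 1).inter_left V.closed_of_finiteDimensional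
  have hsub : ∀ a ∈ V, ∀ b ∈ V, g a - g b ≤ sSup (g '' B) * ‖a - b‖ := by
    intro a ha b hb
    have := hadd b hb (a - b) (V.sub_mem ha hb)
    rw [add_sub_cancel] at this
    linarith [le_sSup_image_mul_norm hsmul hbdd (V.sub_mem ha hb)]
  have hlip : LipschitzOnWith (sSup (g '' B)).toNNReal g B := by
    refine LipschitzOnWith.of_dist_le' fun a ha b hb => ?_
    rw [Real.dist_eq, dist_eq_norm, abs_sub_le_iff]
    exact ⟨hsub a ha.1 b hb.1, norm_sub_rev a b ▸ hsub b hb.1 a ha.1⟩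
  have hne : B.Nonempty := ⟨0, V.zero_mem, mem_closedBall_self zero_le_one⟩
  exact (hcompact.image_of_continuousOn hlip.continuousOn).sSup_mem (hne.image g)

end Sublinear

section Hoffman

variable {n m : ℕ}

theorem nrmInvRes_eq_sSup_image {T : Set ((Fin n → ℝ) × (Fin m → ℝ))}
    {W : Submodule ℝ (Fin m → ℝ)} (hW : {y | ∃ x, (x, y) ∈ T} = W)
    (L : Submodule ℝ (Fin m → ℝ)) :
    nrmInvRes T L =
      sSup (minPreimageNorm T '' (((W ⊓ L : Submodule ℝ _) : Set _) ∩ closedBall 0 1)) := by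
  have himage := Set.ext_iff.1 hW
  refine congrArg sSup (Set.ext fun t => ⟨?_, ?_⟩)
  · rintro ⟨y, hy, hyL, hy1, rfl⟩
    exact ⟨y, ⟨⟨(himage y).1 hy, hyL⟩, mem_closedBall_zero_iff.2 hy1⟩, rfl⟩
  · rintro ⟨y, ⟨⟨hyW, hyL⟩, hy1⟩, rfl⟩
    exact ⟨y, (himage y).2 hyW, hyL, mem_closedBall_zero_iff.1 hy1, rfl⟩

theorem exists_extremal_pair {T : Set ((Fin n → ℝ) × (Fin m → ℝ))}
    (hT : IsPolyhedralCone T) (hsurj : RelSurjGraph T)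
    {L : Submodule ℝ (Fin m → ℝ)} (hpos : 0 < nrmInvRes T L) :
    ∃ (x₀ : Fin n → ℝ) (y₀ : Fin m → ℝ), (x₀, y₀) ∈ T ∧ y₀ ∈ L ∧ ‖y₀‖ ≤ 1 ∧ ‖x₀‖ = nrmInvRes T L ∧
      (∀ x, (x, y₀) ∈ T → ‖x₀‖ ≤ ‖x‖) ∧
      ∀ w, ((0 : Fin n → ℝ), w) ∈ T → y₀ - w ∈ L → 1 ≤ ‖y₀ - w‖ := by
  have hclosed := hT.isClosed
  obtain ⟨C, rfl⟩ := hT.exists_pointedCone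
  obtain ⟨W, hW⟩ := hsurj
  have himage := Set.ext_iff.1 hW
  rw [nrmInvRes_eq_sSup_image hW] at hpos ⊢
  set g := minPreimageNorm (E := Fin n → ℝ) (F := Fin m → ℝ) C
  have hbdd : BddAbove (g '' (((W ⊓ L : Submodule ℝ (Fin m → ℝ)) : Set _) ∩ closedBall 0 1)) := by
    by_contra h
    rw [Real.sSup_of_not_bddAbove h] at hpos
    exact hpos.false
  have hsmul : ∀ c : ℝ, 0 < c → ∀ a ∈ W ⊓ L, g (c • a) ≤ c * g a :=
    fun c hc a ha => minPreimageNorm_smul_le C ((himage a).2 ha.1) hc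
  have hadd : ∀ a ∈ W ⊓ L, ∀ b ∈ W ⊓ L, g (a + b) ≤ g a + g b :=
    fun a ha b hb => minPreimageNorm_add_le C ((himage a).2 ha.1) ((himage b).2 hb.1)
  obtain ⟨y₀, ⟨⟨hy₀W, hy₀L⟩, hy₀1⟩, hy₀⟩ := exists_eq_sSup_image hadd hsmul hbdd
  obtain ⟨x₀, hx₀T, hx₀⟩ := exists_norm_eq_minPreimageNorm ((himage y₀).2 hy₀W)
    (hclosed.preimage (Continuous.prodMk_left y₀))
  refine ⟨x₀, y₀, hx₀T, hy₀L, mem_closedBall_zero_iff.1 hy₀1, hx₀.trans hy₀,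
    fun x hx => hx₀ ▸ minPreimageNorm_le hx, fun w hw hwL => ?_⟩
  have hwW : w ∈ W := (himage w).1 ⟨0, hw⟩
  exact one_le_norm_sub_of_minPreimageNorm_eq C hpos
    (fun y hyL hy => le_sSup_image_mul_norm hsmul hbdd ⟨(himage y).1 hy, hyL⟩) hy₀ hw
    ((himage _).2 (W.sub_mem hy₀W hwW)) hwL

theorem exists_hoffSV_eq_nrmInvRes {Φ : (Fin n → ℝ) → Set (Fin m → ℝ)}
    (hK : IsPolyhedralCone (svGraph Φ)) {L : Submodule ℝ (Fin m → ℝ)} (hH : 0 < HoffSV Φ L) :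
    ∃ T ∈ tangentCones (svGraph Φ), RelSurjGraph T ∧ HoffSV Φ L = nrmInvRes T L := by
  have hfin : {t | ∃ T ∈ tangentCones (svGraph Φ), RelSurjGraph T ∧ t = nrmInvRes T L}.Finite :=
    (hK.finite_tangentCones.image (nrmInvRes · L)).subset
      (by rintro t ⟨T, hT, -, rfl⟩; exact ⟨T, hT, rfl⟩)
  have hne : {t | ∃ T ∈ tangentCones (svGraph Φ), RelSurjGraph T ∧ t = nrmInvRes T L}.Nonempty := by
    by_contra h
    rw [Set.not_nonempty_iff_eq_empty] at h
    rw [HoffSV, h, Real.sSup_empty] at hH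
    exact hH.false
  exact hne.csSup_mem hfin

theorem sInf_norm_add_smul_sub_eq {Φ : (Fin n → ℝ) → Set (Fin m → ℝ)} {L : Submodule ℝ (Fin m → ℝ)}
    {p : (Fin n → ℝ) × (Fin m → ℝ)} (hp : p ∈ svGraph Φ) {y₀ : Fin m → ℝ} (hy₀L : y₀ ∈ L)
    (hy₀ : ‖y₀‖ ≤ 1)
    (hsep : ∀ w, ((0 : Fin n → ℝ), w) ∈ tangConeAt (svGraph Φ) p → y₀ - w ∈ L → 1 ≤ ‖y₀ - w‖)
    {s : ℝ} (hs : 0 < s) :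
    sInf {r | ∃ y ∈ Φ p.1, p.2 + s • y₀ - y ∈ L ∧ r = ‖p.2 + s • y₀ - y‖} = s := by
  refine IsLeast.csInf_eq ⟨⟨p.2, hp, ?_, ?_⟩, ?_⟩
  · simpa using L.smul_mem s hy₀L
  · have h0 := sub_mem_tangConeAt (p := p) hp
    rw [sub_self] at h0
    have h1 : 1 ≤ ‖y₀‖ := by simpa using hsep 0 h0 (by simpa using hy₀L)
    rw [add_sub_cancel_left, norm_smul, Real.norm_of_nonneg hs.le, le_antisymm hy₀ h1, mul_one]
  · rintro r ⟨y, hy, hyL, rfl⟩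
    have hw : ((0 : Fin n → ℝ), s⁻¹ • (y - p.2)) ∈ tangConeAt (svGraph Φ) p := by
      convert smul_mem_tangConeAt (inv_pos.2 hs)
        (sub_mem_tangConeAt (K := svGraph Φ) (p := p) (q := (p.1, y)) hy) using 1
      ext <;> simp
    have hrescale : y₀ - s⁻¹ • (y - p.2) = s⁻¹ • (p.2 + s • y₀ - y) := by
      rw [smul_sub s⁻¹ (p.2 + s • y₀), smul_add, inv_smul_smul₀ hs.ne', smul_sub]
      abel
    have := hsep _ hw (hrescale ▸ L.smul_mem _ hyL)
    rwa [hrescale, norm_smul, Real.norm_of_nonneg (inv_nonneg.2 hs.le), ← div_eq_inv_mul,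
      one_le_div hs] at this

theorem infDist_preimage_eq {Φ : (Fin n → ℝ) → Set (Fin m → ℝ)}
    {p : (Fin n → ℝ) × (Fin m → ℝ)} {x₀ : Fin n → ℝ} {y₀ : Fin m → ℝ} {s : ℝ} (hs : 0 < s)
    (hmem : p.1 + s • x₀ ∈ {x | p.2 + s • y₀ ∈ Φ x})
    (hmin : ∀ x, (x, y₀) ∈ tangConeAt (svGraph Φ) p → ‖x₀‖ ≤ ‖x‖) :
    infDist p.1 {x | p.2 + s • y₀ ∈ Φ x} = s * ‖x₀‖ := by
  refine le_antisymm ?_ ((le_infDist ⟨_, hmem⟩).2 fun x hx => ?_)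
  · refine (infDist_le_dist_of_mem hmem).trans_eq ?_
    rw [dist_self_add_right, norm_smul, Real.norm_of_nonneg hs.le]
  · have hT : (s⁻¹ • (x - p.1), y₀) ∈ tangConeAt (svGraph Φ) p := by
      convert smul_mem_tangConeAt (inv_pos.2 hs)
        (sub_mem_tangConeAt (K := svGraph Φ) (p := p) (q := (x, _)) hx) using 1
      ext <;> simp [inv_mul_cancel_left₀ hs.ne']
    have := hmin _ hT
    rw [norm_smul, Real.norm_of_nonneg (inv_nonneg.2 hs.le), ← div_eq_inv_mul,
      le_div_iff₀' hs] at this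
    rwa [dist_comm, dist_eq_norm]

end Hoffman

open Metric in
/-- Theorem 1, tightness: if `H(Φ|𝓛) > 0` then there exist
`b ∈ Im(Φ)` and `u ∈ dom(Φ)` with `0 < dist_𝓛(b, Φ(u)) < ∞` and
`dist(u, Φ⁻¹(b)) = H(Φ|𝓛) · dist_𝓛(b, Φ(u))`.  Finiteness of
`dist_𝓛(b, Φ(u))` is rendered as nonemptiness of `{y ∈ Φ(u) : b - y ∈ 𝓛}`. -/
theorem hoffman_bound_tight {n m : ℕ} (Φ : (Fin n → ℝ) → Set (Fin m → ℝ))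
    (hK : IsPolyhedralCone (svGraph Φ)) (L : Submodule ℝ (Fin m → ℝ))
    (hH : 0 < HoffSV Φ L) :
    ∃ b : Fin m → ℝ, (∃ x, b ∈ Φ x) ∧
      ∃ u : Fin n → ℝ, (Φ u).Nonempty ∧
        {y | y ∈ Φ u ∧ b - y ∈ L}.Nonempty ∧
        0 < sInf {r | ∃ y ∈ Φ u, b - y ∈ L ∧ r = ‖b - y‖} ∧
        infDist u {x | b ∈ Φ x} =
          HoffSV Φ L * sInf {r | ∃ y ∈ Φ u, b - y ∈ L ∧ r = ‖b - y‖} := by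
  obtain ⟨T, ⟨p, hp, rfl⟩, hsurj, hHT⟩ := exists_hoffSV_eq_nrmInvRes hK hH
  obtain ⟨x₀, y₀, ⟨s, hs, hsK⟩, hy₀L, hy₀, hx₀, hmin, hsep⟩ :=
    exists_extremal_pair (hK.tangConeAt hp) hsurj (hHT ▸ hH)
  refine ⟨p.2 + s • y₀, ⟨_, hsK⟩, p.1, ⟨p.2, hp⟩, ⟨p.2, hp, by simpa using L.smul_mem s hy₀L⟩, ?_⟩
  rw [sInf_norm_add_smul_sub_eq hp hy₀L hy₀ hsep hs, infDist_preimage_eq hs hsK hmin, hx₀, hHT]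
  exact ⟨hs, mul_comm _ _⟩
end

section
/- Let A ∈ ℝ^{m×n}. For all b ∈ ℝ^m such that P_{A,b} := {x ∈ ℝ^n : Ax ≤ b} is nonempty and all u ∈ ℝ^n, dist(u, P_{A,b}) ≤ H(A) · dist(b, Au + ℝ^m_+) ≤ H(A) · ‖(Au−b)_+‖. -/
open Matrix Metric

/-- `J ⊆ {1,…,m}` is `A`-surjective: `A_J ℝ^n + ℝ^J_+ = ℝ^J`. -/
def ASurj {m n : ℕ} (A : Matrix (Fin m) (Fin n) ℝ) (J : Set (Fin m)) : Prop :=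
  ∀ w : Fin m → ℝ, ∃ x : Fin n → ℝ, ∀ i ∈ J, A.mulVec x i ≤ w i

/-- `H_J(A) = max_{‖v‖ ≤ 1} min{‖x‖ : A_J x ≤ v_J}` (which is `0` for `J = ∅`). -/
noncomputable def HJ {m n : ℕ} (A : Matrix (Fin m) (Fin n) ℝ) (J : Set (Fin m)) : ℝ :=
  sSup {t | ∃ v : Fin m → ℝ, ‖v‖ ≤ 1 ∧
    t = sInf {r | ∃ x : Fin n → ℝ, (∀ i ∈ J, A.mulVec x i ≤ v i) ∧ r = ‖x‖}}

/-- The Hoffman constant `H(A) = max_{J ∈ S(A)} H_J(A)`. -/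
noncomputable def HoffA {m n : ℕ} (A : Matrix (Fin m) (Fin n) ℝ) : ℝ :=
  sSup {t | ∃ J : Set (Fin m), ASurj A J ∧ t = HJ A J}

/-- The dual norm `‖v‖* = max_{‖x‖ ≤ 1} ⟨v, x⟩`. -/
noncomputable def dualNorm {d : ℕ} (v : Fin d → ℝ) : ℝ :=
  sSup {t | ∃ x : Fin d → ℝ, ‖x‖ ≤ 1 ∧ t = ∑ i, v i * x i}

/-!
Let `x₀` be a point of `P = {x | Ax ≤ b}` nearest to `u` and `d = dist(u, P)`. Hahn–Banach gives a
functional `F` of norm at most one with `F u + d ≤ F` on `P`; then `F` is minimised over `P` at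
`x₀`, and the KKT conditions (Farkas' lemma) give `l ≥ 0`, supported on constraints active at
`x₀`, with `lᵀA = -F`. By the conic Carathéodory theorem the rows of `A` on the support `J` of `l`
can be taken linearly independent, so `J` is `A`-surjective. For `y = Au + s` with `s ≥ 0`,
`d ≤ F x₀ - F u = ⟨l, Au - b⟩ ≤ -⟨l, b - y⟩`, and testing `v = (b - y)/‖b - y‖` in the
definition of `H_J(A)` bounds the last term by `H_J(A)‖b - y‖`.
-/

open Function Filter Topology

section ConicCaratheodory

variable {ι E : Type*} [Fintype ι] [AddCommGroup E] [Module ℝ E]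

lemma exists_nonneg_support_ssubset_sum_smul_eq (v : ι → E) {l g : ι → ℝ} (hl : 0 ≤ l)
    (hgl : support g ⊆ support l) (hgv : ∑ i, g i • v i = 0) (hg : g ≠ 0) :
    ∃ l' : ι → ℝ, 0 ≤ l' ∧ support l' ⊂ support l ∧ ∑ i, l' i • v i = ∑ i, l i • v i := by
  classical
  wlog hpos : ∃ j, 0 < g j generalizing g
  · obtain ⟨j, hj⟩ := ne_iff.1 hg
    refine this (g := -g) (by simpa using hgl) (by simp [neg_smul, hgv]) (neg_ne_zero.2 hg) ⟨j, ?_⟩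
    push Not at hpos
    simpa using (hpos j).lt_of_ne hj
  obtain ⟨j, hj⟩ := hpos
  obtain ⟨i₀, hi₀, hmin⟩ := Finset.exists_min_image {i | 0 < g i} (fun i => l i / g i)
    ⟨j, by simpa using hj⟩
  rw [Finset.mem_filter_univ] at hi₀
  -- the largest step along `-g` that keeps `l` nonnegative
  set t := l i₀ / g i₀
  have ht : 0 ≤ t := div_nonneg (hl i₀) hi₀.le
  refine ⟨l - t • g, fun i => ?_, ?_, ?_⟩
  · rcases lt_or_ge 0 (g i) with hgi | hgi
    · have := hmin i (by simpa using hgi)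
      rw [le_div_iff₀ hgi] at this
      simpa using this
    · simpa using (mul_nonpos_of_nonneg_of_nonpos ht hgi).trans (hl i)
  · refine Set.ssubset_iff_of_subset (fun i hi => ?_) |>.2 ⟨i₀, hgl hi₀.ne', ?_⟩
    · by_contra hli
      have hgi : g i = 0 := notMem_support.1 fun h => hli (hgl h)
      exact hi (by simp [notMem_support.1 hli, hgi])
    · simp [t, div_mul_cancel₀ _ hi₀.ne']
  · simp [sub_smul, Finset.sum_sub_distrib, mul_smul, ← Finset.smul_sum, hgv]

/-- Conic Carathéodory theorem. -/
theorem exists_nonneg_linearIndepOn_support_sum_smul_eq (v : ι → E) {l : ι → ℝ} (hl : 0 ≤ l) :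
    ∃ l' : ι → ℝ, 0 ≤ l' ∧ support l' ⊆ support l ∧ LinearIndepOn ℝ v (support l') ∧
      ∑ i, l' i • v i = ∑ i, l i • v i := by
  induction hs : support l using WellFoundedLT.induction generalizing l with
  | _ s ih =>
    subst hs
    by_cases hind : LinearIndepOn ℝ v (support l)
    · exact ⟨l, hl, subset_rfl, hind, rfl⟩
    obtain ⟨g, hgs, hgv, hg⟩ := linearDepOn_iff'.1 hind
    obtain ⟨l₁, hl₁, hss, hsum⟩ := exists_nonneg_support_ssubset_sum_smul_eq v hl
      (g := g) (by simpa [Finsupp.mem_supported] using hgs)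
      (by simpa [Finsupp.linearCombination_apply, Finsupp.sum_fintype] using hgv)
      (by simpa using hg)
    obtain ⟨l₂, hl₂, hsub, hind₂, hsum₂⟩ := ih _ hss hl₁ rfl
    exact ⟨l₂, hl₂, hsub.trans hss.subset, hind₂, hsum₂.trans hsum⟩

end ConicCaratheodory

section Farkas

variable {ι E : Type*} [Fintype ι] [NormedAddCommGroup E] [NormedSpace ℝ E]

lemma sum_subtype_eq_sum_of_notMem {M : Type*} [AddCommMonoid M] (s : Set ι) [Fintype s]
    {f : ι → M} (hf : ∀ i ∉ s, f i = 0) : ∑ i : s, f i = ∑ i, f i := by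
  rw [Finset.sum_set_coe]
  exact Finset.sum_subset (Finset.subset_univ _) fun i _ hi => hf i (by simpa using hi)

theorem isClosed_linearCombination_image_Ici (v : ι → E) :
    IsClosed (Fintype.linearCombination ℝ v '' Set.Ici 0) := by
  classical
  -- by Carathéodory, the cone is the union of the cones spanned by independent subfamilies
  have hunion : Fintype.linearCombination ℝ v '' Set.Ici 0 =
      ⋃ (s : Set ι) (_ : LinearIndepOn ℝ v s),
        Fintype.linearCombination ℝ (fun i : s => v i) '' Set.Ici 0 := by
    ext x
    simp only [Set.mem_image, Set.mem_iUnion, Set.mem_Ici, Fintype.linearCombination_apply]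
    constructor
    · rintro ⟨l, hl, rfl⟩
      obtain ⟨l', hl', -, hind, hsum⟩ := exists_nonneg_linearIndepOn_support_sum_smul_eq v hl
      refine ⟨support l', hind, fun i => l' i, fun i => hl' i, ?_⟩
      rw [← hsum]
      exact sum_subtype_eq_sum_of_notMem (f := fun i => l' i • v i) (support l') fun i hi => by
        rw [notMem_support.1 hi, zero_smul]
    · rintro ⟨s, -, c, hc, rfl⟩
      refine ⟨fun i => if h : i ∈ s then c ⟨i, h⟩ else 0, fun i => ?_, ?_⟩
      · by_cases h : i ∈ s
        · simpa [h] using hc ⟨i, h⟩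
        · simp [h]
      · rw [← sum_subtype_eq_sum_of_notMem s fun i hi => by simp [hi]]
        simp
  rw [hunion]
  refine isClosed_iUnion_of_finite fun s => isClosed_iUnion_of_finite fun hs => ?_
  refine (LinearMap.isClosedEmbedding_of_injective ?_).isClosedMap _ isClosed_Ici
  exact LinearMap.ker_eq_bot.2 (linearIndependent_iff_injective_fintypeLinearCombination.1 hs)

/-- Farkas' lemma. -/
theorem exists_nonneg_sum_smul_eq_of_forall_dual (v : ι → E) (c : E)
    (h : ∀ f : StrongDual ℝ E, (∀ i, 0 ≤ f (v i)) → 0 ≤ f c) :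
    ∃ l : ι → ℝ, 0 ≤ l ∧ ∑ i, l i • v i = c := by
  classical
  let K : ProperCone ℝ E :=
    ⟨(PointedCone.positive ℝ (ι → ℝ)).map (Fintype.linearCombination ℝ v),
      by simpa [PointedCone.coe_map] using isClosed_linearCombination_image_Ici v⟩
  have hK : ∀ x, x ∈ K ↔ ∃ l : ι → ℝ, 0 ≤ l ∧ ∑ i, l i • v i = x := by
    simp [K, PointedCone.mem_map, Fintype.linearCombination_apply]
  by_contra hc
  obtain ⟨f, hfK, hfc⟩ := K.hyperplane_separation_point ((hK c).not.2 hc)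
  refine (h f fun i => hfK _ ((hK _).2 ⟨Pi.single i 1, ?_, ?_⟩)).not_gt hfc
  · exact Pi.single_nonneg.2 zero_le_one
  · simp

end Farkas

section Polyhedron

variable {ι κ : Type*} [Fintype ι] [Fintype κ]

lemma dual_apply_eq_dotProduct [DecidableEq κ] (F : Module.Dual ℝ (κ → ℝ)) (y : κ → ℝ) :
    F y = (dotProductEquiv ℝ κ).symm F ⬝ᵥ y := by
  rw [← dotProductEquiv_apply_apply, LinearEquiv.apply_symm_apply]

theorem exists_nonneg_dotProduct_mulVec_eq (B : Matrix ι κ ℝ) (F : Module.Dual ℝ (κ → ℝ))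
    (h : ∀ y, 0 ≤ B *ᵥ y → 0 ≤ F y) : ∃ l : ι → ℝ, 0 ≤ l ∧ ∀ y, l ⬝ᵥ (B *ᵥ y) = F y := by
  classical
  obtain ⟨l, hl, hlB⟩ := exists_nonneg_sum_smul_eq_of_forall_dual B
    ((dotProductEquiv ℝ κ).symm F) fun f hf => by
      set y := (dotProductEquiv ℝ κ).symm f.toLinearMap
      have hfy : ∀ x, f x = x ⬝ᵥ y := fun x => by
        rw [dotProduct_comm]
        exact dual_apply_eq_dotProduct f.toLinearMap x
      rw [hfy, ← dual_apply_eq_dotProduct F]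
      exact h y fun i => by have := hf i; rwa [hfy] at this
  refine ⟨l, hl, fun y => ?_⟩
  rw [dotProduct_mulVec, vecMul_eq_sum, hlB, dual_apply_eq_dotProduct F]

variable (A : Matrix ι κ ℝ) {b : ι → ℝ}

lemma exists_pos_mulVec_add_smul_le {x y : κ → ℝ} (hx : A *ᵥ x ≤ b)
    (hy : ∀ i, (A *ᵥ x) i = b i → (A *ᵥ y) i ≤ 0) : ∃ t : ℝ, 0 < t ∧ A *ᵥ (x + t • y) ≤ b := by
  have h : ∀ i, ∀ᶠ t in 𝓝[>] (0 : ℝ), (A *ᵥ x) i + t * (A *ᵥ y) i ≤ b i := by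
    intro i
    rcases (hx i).eq_or_lt with hi | hi
    · filter_upwards [self_mem_nhdsWithin] with t (ht : 0 < t)
      nlinarith [hy i hi]
    · have hlim : Tendsto (fun t : ℝ => (A *ᵥ x) i + t * (A *ᵥ y) i) (𝓝[>] 0)
          (𝓝 ((A *ᵥ x) i)) :=
        (Continuous.tendsto' (by fun_prop) 0 _ (by simp)).mono_left nhdsWithin_le_nhds
      filter_upwards [hlim.eventually (gt_mem_nhds hi)] with t ht using ht.le
  obtain ⟨t, ht, ht₀⟩ := ((eventually_all.2 h).and self_mem_nhdsWithin).exists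
  exact ⟨t, ht₀, fun i => by simpa [mulVec_add, mulVec_smul] using ht i⟩

theorem exists_kkt_multiplier (F : Module.Dual ℝ (κ → ℝ)) {x : κ → ℝ} (hx : A *ᵥ x ≤ b)
    (hmin : ∀ z, A *ᵥ z ≤ b → F x ≤ F z) :
    ∃ l : ι → ℝ, 0 ≤ l ∧ (∀ i, l i ≠ 0 → (A *ᵥ x) i = b i) ∧ ∀ y, l ⬝ᵥ (A *ᵥ y) = -F y := by
  classical
  -- left multiplication by `diagonal active` restricts Farkas' lemma to the active rows
  let active : ι → ℝ := fun i => if (A *ᵥ x) i = b i then 1 else 0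
  obtain ⟨l, hl, hlF⟩ := exists_nonneg_dotProduct_mulVec_eq (diagonal active * A) (-F)
    fun y hy => by
      obtain ⟨t, ht, htb⟩ := exists_pos_mulVec_add_smul_le A hx (y := -y) fun i hi => by
        have := hy i
        simp only [← mulVec_mulVec, Pi.zero_apply, mulVec_diagonal, active, hi] at this
        simpa [mulVec_neg] using this
      have := hmin _ htb
      simp only [map_add, map_smul, map_neg, smul_eq_mul] at this
      simp only [LinearMap.neg_apply, Left.nonneg_neg_iff]
      nlinarith
  refine ⟨l ᵥ* diagonal active, fun i => ?_, fun i hi => ?_, fun y => ?_⟩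
  · rw [Pi.zero_apply, vecMul_diagonal]
    exact mul_nonneg (hl i) (by positivity)
  · by_contra h
    simp [vecMul_diagonal, active, h] at hi
  · rw [← dotProduct_mulVec, mulVec_mulVec, hlF, LinearMap.neg_apply]

theorem exists_kkt_multiplier_linearIndepOn (F : Module.Dual ℝ (κ → ℝ)) {x : κ → ℝ}
    (hx : A *ᵥ x ≤ b) (hmin : ∀ z, A *ᵥ z ≤ b → F x ≤ F z) :
    ∃ l : ι → ℝ, 0 ≤ l ∧ LinearIndepOn ℝ A (support l) ∧ l ⬝ᵥ (A *ᵥ x) = l ⬝ᵥ b ∧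
      ∀ y, l ⬝ᵥ (A *ᵥ y) = -F y := by
  obtain ⟨l₀, hl₀, hslack, hl₀F⟩ := exists_kkt_multiplier A F hx hmin
  obtain ⟨l, hl, hsupp, hind, hsum⟩ := exists_nonneg_linearIndepOn_support_sum_smul_eq A hl₀
  refine ⟨l, hl, hind, Finset.sum_congr rfl fun i _ => ?_, fun y => ?_⟩
  · by_cases h : l i = 0
    · simp [h]
    · rw [hslack i (hsupp h)]
  · rw [dotProduct_mulVec, vecMul_eq_sum, hsum, ← vecMul_eq_sum, ← dotProduct_mulVec, hl₀F]

end Polyhedron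

section DistanceDuality

lemma le_mul_infDist_of_forall_le_mul_dist {X : Type*} [PseudoMetricSpace X] {s : Set X}
    (hs : s.Nonempty) {x : X} {c r : ℝ} (hc : 0 ≤ c) (h : ∀ y ∈ s, r ≤ c * dist x y) :
    r ≤ c * infDist x s := by
  have := hs.to_subtype
  rw [infDist_eq_iInf, Real.mul_iInf_of_nonneg hc]
  exact le_ciInf fun y => h y y.2

lemma infDist_add_nonneg_le_norm_max_sub_zero {ι : Type*} [Fintype ι] (a b : ι → ℝ) :
    infDist b {y | ∃ s : ι → ℝ, (∀ i, 0 ≤ s i) ∧ y = a + s} ≤ ‖fun i => max (a i - b i) 0‖ := by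
  have hmem : a + (fun i => max (b i - a i) 0) ∈ {y | ∃ s : ι → ℝ, (∀ i, 0 ≤ s i) ∧ y = a + s} :=
    ⟨_, fun i => le_max_right _ _, rfl⟩
  refine (infDist_le_dist_of_mem hmem).trans_eq ?_
  rw [dist_eq_norm, ← norm_neg]
  congr 1
  ext i
  simp only [Pi.neg_apply, Pi.sub_apply, Pi.add_apply]
  rcases le_total (a i) (b i) with h | h
  · rw [max_eq_left (by linarith), max_eq_right (by linarith)]; ring
  · rw [max_eq_right (by linarith), max_eq_left (by linarith)]; ring

variable {E : Type*} [NormedAddCommGroup E] [NormedSpace ℝ E]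

lemma apply_le_norm_of_norm_le_one {F : StrongDual ℝ E} (hF : ‖F‖ ≤ 1) (x : E) : F x ≤ ‖x‖ :=
  (Real.le_norm_self _).trans ((F.le_opNorm x).trans (mul_le_of_le_one_left (norm_nonneg x) hF))

lemma mul_norm_le_of_forall_norm_lt (f : StrongDual ℝ E) {d a : ℝ} (hd : 0 < d)
    (h : ∀ w, ‖w‖ < d → f w ≤ a) : d * ‖f‖ ≤ a := by
  rw [← le_div_iff₀' hd]
  by_contra! hlt
  obtain ⟨x, hx, hfx⟩ := f.exists_lt_apply_of_lt_opNorm hlt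
  obtain ⟨y, hy, hfy⟩ : ∃ y, ‖y‖ = ‖x‖ ∧ f y = ‖f x‖ := by
    rcases le_total 0 (f x) with h | h
    · exact ⟨x, rfl, (Real.norm_of_nonneg h).symm⟩
    · exact ⟨-x, norm_neg x, by simp [Real.norm_of_nonpos h]⟩
  have := h (d • y) <| by
    rw [norm_smul, Real.norm_of_nonneg hd.le, hy]
    exact mul_lt_of_lt_one_right hd hx
  rw [map_smul, smul_eq_mul, hfy] at this
  rw [div_lt_iff₀' hd] at hfx
  linarith

theorem exists_norm_le_one_forall_add_infDist_le {P : Set E} (hP : Convex ℝ P) (u : E) :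
    ∃ F : StrongDual ℝ E, ‖F‖ ≤ 1 ∧ ∀ z ∈ P, F u + infDist u P ≤ F z := by
  rcases (infDist_nonneg (x := u) (s := P)).eq_or_lt' with hd | hd
  · exact ⟨0, by simp, fun z _ => by simp [hd]⟩
  obtain ⟨f, c, hfB, hfP⟩ :=
    geometric_hahn_banach_open (convex_ball u _) isOpen_ball hP disjoint_ball_infDist
  have hf : infDist u P * ‖f‖ ≤ c - f u := mul_norm_le_of_forall_norm_lt f hd fun w hw => by
    have := hfB (u + w) (by simpa using hw)
    rw [map_add] at this
    linarith
  obtain ⟨z₀, hz₀⟩ : P.Nonempty := by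
    by_contra! h
    simp [h] at hd
  have hf₀ : 0 < ‖f‖ := by
    refine norm_pos_iff.2 fun h => ?_
    have := (hfB u (mem_ball_self hd)).trans_le (hfP z₀ hz₀)
    simp [h] at this
  refine ⟨‖f‖⁻¹ • f, by rw [norm_smul, norm_inv, norm_norm, inv_mul_cancel₀ hf₀.ne'], ?_⟩
  intro z hz
  have : infDist u P ≤ ‖f‖⁻¹ * (f z - f u) := by
    rw [le_inv_mul_iff₀ hf₀]
    linarith [hfP z hz]
  change ‖f‖⁻¹ * f u + _ ≤ ‖f‖⁻¹ * f z
  linarith [mul_sub ‖f‖⁻¹ (f z) (f u)]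

end DistanceDuality

section Hoffman

variable {m n : ℕ} {A : Matrix (Fin m) (Fin n) ℝ}

lemma aSurj_of_linearIndepOn {J : Set (Fin m)} (hJ : LinearIndepOn ℝ A J) : ASurj A J := by
  classical
  intro w
  let B : Matrix J (Fin n) ℝ := A.submatrix (↑) id
  have hB : LinearMap.range B.mulVecLin = ⊤ := by
    refine Submodule.eq_top_of_finrank_eq ?_
    rw [Module.finrank_fintype_fun_eq_card, ← LinearIndependent.rank_matrix hJ]
    rfl
  obtain ⟨x, hx⟩ := LinearMap.range_eq_top.1 hB fun i => w i
  exact ⟨x, fun i hi => (congrFun hx ⟨i, hi⟩).le⟩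

lemma HJ_nonneg (J : Set (Fin m)) : 0 ≤ HJ A J :=
  Real.sSup_nonneg <| by
    rintro _ ⟨v, -, rfl⟩
    exact Real.sInf_nonneg <| by rintro _ ⟨x, -, rfl⟩; exact norm_nonneg x

lemma HoffA_nonneg : 0 ≤ HoffA A :=
  Real.sSup_nonneg <| by rintro _ ⟨J, -, rfl⟩; exact HJ_nonneg J

lemma HJ_le_HoffA {J : Set (Fin m)} (hJ : ASurj A J) : HJ A J ≤ HoffA A := by
  refine le_csSup (Set.Finite.bddAbove ?_) ⟨J, hJ, rfl⟩
  exact (Set.finite_range (HJ A)).subset <| by rintro _ ⟨J, -, rfl⟩; exact ⟨J, rfl⟩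

lemma sInf_le_HJ {J : Set (Fin m)} (hJ : ASurj A J) {v : Fin m → ℝ} (hv : ‖v‖ ≤ 1) :
    sInf {r | ∃ x : Fin n → ℝ, (∀ i ∈ J, A.mulVec x i ≤ v i) ∧ r = ‖x‖} ≤ HJ A J := by
  refine le_csSup ?_ ⟨v, hv, rfl⟩
  -- a solution of `A_J q ≤ -1` is feasible for every `v` in the unit ball of the sup norm
  obtain ⟨q, hq⟩ := hJ fun _ => -1
  refine ⟨‖q‖, ?_⟩
  rintro _ ⟨w, hw, rfl⟩
  refine csInf_le ⟨0, ?_⟩ ⟨q, fun i hi => (hq i hi).trans ?_, rfl⟩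
  · rintro _ ⟨x, -, rfl⟩
    exact norm_nonneg x
  · exact neg_le_of_abs_le ((norm_le_pi_norm w i).trans hw)

lemma neg_dotProduct_le_HJ_mul_norm {l : Fin m → ℝ} (hl : 0 ≤ l) (hJ : ASurj A (support l))
    (hlA : ∀ x, -(l ⬝ᵥ (A *ᵥ x)) ≤ ‖x‖) (w : Fin m → ℝ) : -(l ⬝ᵥ w) ≤ HJ A (support l) * ‖w‖ := by
  rcases eq_or_ne w 0 with rfl | hw
  · simp
  set v := ‖w‖⁻¹ • w
  have hv : ‖v‖ ≤ 1 := by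
    rw [norm_smul, norm_inv, norm_norm, inv_mul_cancel₀ (norm_ne_zero_iff.2 hw)]
  have hlv : -(l ⬝ᵥ v) ≤ HJ A (support l) := by
    refine le_trans (le_csInf ?_ ?_) (sInf_le_HJ hJ hv)
    · obtain ⟨x, hx⟩ := hJ v
      exact ⟨_, x, hx, rfl⟩
    · rintro _ ⟨x, hx, rfl⟩
      have hAx : l ⬝ᵥ (A *ᵥ x) ≤ l ⬝ᵥ v := Finset.sum_le_sum fun i _ => by
        by_cases hi : l i = 0
        · simp [hi]
        · exact mul_le_mul_of_nonneg_left (hx i hi) (hl i)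
      linarith [hlA x]
  calc -(l ⬝ᵥ w) = ‖w‖ * -(l ⬝ᵥ v) := by
        simp [v, dotProduct_smul, mul_inv_cancel_left₀ (norm_ne_zero_iff.2 hw)]
    _ ≤ ‖w‖ * HJ A (support l) := mul_le_mul_of_nonneg_left hlv (norm_nonneg w)
    _ = HJ A (support l) * ‖w‖ := mul_comm _ _

theorem exists_aSurj_multiplier_infDist_le {b : Fin m → ℝ}
    (hP : {x : Fin n → ℝ | ∀ i, A.mulVec x i ≤ b i}.Nonempty) (u : Fin n → ℝ) :
    ∃ l : Fin m → ℝ, 0 ≤ l ∧ ASurj A (support l) ∧ (∀ x, -(l ⬝ᵥ (A *ᵥ x)) ≤ ‖x‖) ∧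
      infDist u {x : Fin n → ℝ | ∀ i, A.mulVec x i ≤ b i} ≤ l ⬝ᵥ (A *ᵥ u - b) := by
  set P := {x : Fin n → ℝ | ∀ i, A.mulVec x i ≤ b i}
  obtain ⟨F, hF, hFP⟩ := exists_norm_le_one_forall_add_infDist_le
    (show Convex ℝ P from (convex_Iic b).linear_preimage A.mulVecLin) u
  obtain ⟨x₀, hx₀, hx₀u⟩ := (show IsClosed P from
    isClosed_Iic.preimage A.mulVecLin.continuous_of_finiteDimensional).exists_infDist_eq_dist hP u
  have hmin : ∀ z ∈ P, F x₀ ≤ F z := fun z hz => by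
    have := apply_le_norm_of_norm_le_one hF (x₀ - u)
    rw [map_sub, ← dist_eq_norm, dist_comm, ← hx₀u] at this
    linarith [hFP z hz]
  obtain ⟨l, hl, hind, hslack, hlF⟩ :=
    exists_kkt_multiplier_linearIndepOn A (F : (Fin n → ℝ) →ₗ[ℝ] ℝ) hx₀ hmin
  simp only [ContinuousLinearMap.coe_coe] at hlF
  refine ⟨l, hl, aSurj_of_linearIndepOn hind, fun x => ?_, ?_⟩
  · rw [hlF, neg_neg]
    exact apply_le_norm_of_norm_le_one hF x
  · rw [dotProduct_sub, ← hslack, hlF, hlF]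
    linarith [hFP x₀ hx₀]

end Hoffman

/-- Proposition 1, bound part: for all `b` with
`P_{A,b} = {x : Ax ≤ b} ≠ ∅` and all `u`,
`dist(u, P_{A,b}) ≤ H(A)·dist(b, Au + ℝ^m_+) ≤ H(A)·‖(Au − b)_+‖`. -/
theorem hoffman_ineq_bound {m n : ℕ} (A : Matrix (Fin m) (Fin n) ℝ)
    (b : Fin m → ℝ) (hP : {x : Fin n → ℝ | ∀ i, A.mulVec x i ≤ b i}.Nonempty)
    (u : Fin n → ℝ) :
    infDist u {x : Fin n → ℝ | ∀ i, A.mulVec x i ≤ b i} ≤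
      HoffA A * infDist b
        {y : Fin m → ℝ | ∃ s : Fin m → ℝ, (∀ i, 0 ≤ s i) ∧ y = A.mulVec u + s} ∧
    HoffA A * infDist b
        {y : Fin m → ℝ | ∃ s : Fin m → ℝ, (∀ i, 0 ≤ s i) ∧ y = A.mulVec u + s} ≤
      HoffA A * ‖(fun i => max (A.mulVec u i - b i) 0 : Fin m → ℝ)‖ := by
  refine ⟨?_, mul_le_mul_of_nonneg_left (infDist_add_nonneg_le_norm_max_sub_zero _ b) HoffA_nonneg⟩
  obtain ⟨l, hl, hJ, hlA, hd⟩ := exists_aSurj_multiplier_infDist_le hP u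
  refine le_mul_infDist_of_forall_le_mul_dist (by exact ⟨_, 0, fun _ => le_rfl, rfl⟩)
    HoffA_nonneg ?_
  rintro _ ⟨s, hs, rfl⟩
  calc _ ≤ l ⬝ᵥ (A *ᵥ u - b) := hd
    _ ≤ -(l ⬝ᵥ (b - (A *ᵥ u + s))) := by
        rw [← dotProduct_neg, neg_sub]
        exact dotProduct_le_dotProduct_of_nonneg_left
          (sub_le_sub_right (le_add_of_nonneg_right hs) b) hl
    _ ≤ HJ A (support l) * ‖b - (A *ᵥ u + s)‖ := neg_dotProduct_le_HJ_mul_norm hl hJ hlA _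
    _ ≤ HoffA A * dist b (A *ᵥ u + s) := by
        rw [dist_eq_norm]
        gcongr
        exact HJ_le_HoffA hJ
end

section
/- Let A ∈ ℝ^{m×n}. If H(A) > 0, then there exist b ∈ ℝ^m with P_{A,b} := {x ∈ ℝ^n : Ax ≤ b} nonempty and u ∉ P_{A,b} such that dist(u, P_{A,b}) = H(A) · dist(b, Au + ℝ^m_+). -/
/-!
With sup norms, `‖v‖ ≤ 1` means `v ≥ -1`, and the least norm of a solution of `A_J x ≤ v_J`
decreases as `v` grows, so `H_J(A)` is the least norm `‖x'‖` of a solution `x'` of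
`A_J x ≤ -1`. The maximum defining `H(A)` is over finitely many `J`, hence attained, and
`H(A) > 0` forces `J ≠ ∅`. For `b := max(A x', -1)` we have `b_J = -1`, so `P_{A,b}` lies in
the solution set of `A_J x ≤ -1` and contains `x'`, whence `dist(0, P_{A,b}) = ‖x'‖ = H(A)`;
and `dist(b, ℝ^m_+) = ‖b⁻‖ = 1`. So `u = 0` works.
-/

open Matrix Metric

-- Both sides are `0` when `s = ∅`.
theorem sInf_norm_eq_infDist_zero {E : Type*} [SeminormedAddCommGroup E] (s : Set E) :
    sInf {r | ∃ x, x ∈ s ∧ r = ‖x‖} = infDist 0 s := by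
  have h : {r | ∃ x, x ∈ s ∧ r = ‖x‖} = (‖·‖) '' s := by
    ext r; simp [eq_comm]
  rw [h, sInf_image', infDist_eq_iInf]
  simp only [dist_zero_left]

theorem infDist_eq_dist_of_mem_of_subset {α : Type*} [PseudoMetricSpace α] {s t : Set α}
    {x y : α} (hy : y ∈ t) (hts : t ⊆ s) (h : infDist x s = dist x y) :
    infDist x t = dist x y :=
  le_antisymm (infDist_le_dist_of_mem hy) (h ▸ infDist_le_infDist_of_subset hts ⟨y, hy⟩)

section Orthant

variable {ι : Type*} [Fintype ι]

theorem infDist_setOf_nonneg (b : ι → ℝ) : infDist b {y | 0 ≤ y} = ‖b⁻‖ := by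
  refine le_antisymm ?_ ((le_infDist ⟨0, le_rfl⟩).2 fun y (hy : 0 ≤ y) => ?_)
  · calc infDist b {y | 0 ≤ y} ≤ dist b b⁺ := infDist_le_dist_of_mem (posPart_nonneg b)
      _ = ‖b⁻‖ := by
        rw [dist_eq_norm, ← norm_neg]
        congr 1
        linear_combination posPart_sub_negPart b
  · refine (pi_norm_le_iff_of_nonneg dist_nonneg).2 fun i => ?_
    rw [Pi.negPart_apply, Real.norm_of_nonneg (negPart_nonneg _), negPart_def]
    refine sup_le ?_ dist_nonneg
    have hyi : 0 ≤ y i := hy i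
    calc -b i ≤ |b i - y i| := by linarith [neg_le_abs (b i - y i)]
      _ ≤ dist b y := dist_le_pi_dist b y i

theorem norm_negPart_eq_one {b : ι → ℝ} (hb : ∀ i, -1 ≤ b i) {i₀ : ι} (hi₀ : b i₀ = -1) :
    ‖b⁻‖ = 1 := by
  refine le_antisymm ((pi_norm_le_iff_of_nonneg zero_le_one).2 fun i => ?_) ?_
  · rw [Pi.negPart_apply, Real.norm_of_nonneg (negPart_nonneg _), negPart_def]
    exact sup_le (by linarith [hb i]) zero_le_one
  · calc (1 : ℝ) = ‖b⁻ i₀‖ := by simp [Pi.negPart_apply, hi₀]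
      _ ≤ ‖b⁻‖ := norm_le_pi_norm _ _

end Orthant

section FeasibleSet

variable {ι κ : Type*} [Fintype κ] (A : Matrix ι κ ℝ) (J : Set ι)

def feasibleSet (v : ι → ℝ) : Set (κ → ℝ) := {x | ∀ i ∈ J, A.mulVec x i ≤ v i}

theorem isClosed_feasibleSet (v : ι → ℝ) : IsClosed (feasibleSet A J v) := by
  simp only [feasibleSet, Set.ofPred_forall]
  exact isClosed_biInter fun _ _ => isClosed_le (by fun_prop) continuous_const

theorem feasibleSet_mono {v w : ι → ℝ} (hvw : v ≤ w) : feasibleSet A J v ⊆ feasibleSet A J w :=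
  fun _ hx i hi => (hx i hi).trans (hvw i)

theorem feasibleSet_empty (v : ι → ℝ) : feasibleSet A ∅ v = Set.univ :=
  Set.eq_univ_of_forall fun _ _ hi => hi.elim

end FeasibleSet

section HoffmanConstant

variable {m n : ℕ} {A : Matrix (Fin m) (Fin n) ℝ} {J : Set (Fin m)}

theorem ASurj.feasibleSet_nonempty (hJ : ASurj A J) (v : Fin m → ℝ) :
    (feasibleSet A J v).Nonempty :=
  hJ v

theorem HJ_eq_sSup_infDist (A : Matrix (Fin m) (Fin n) ℝ) (J : Set (Fin m)) :
    HJ A J = sSup {t | ∃ v : Fin m → ℝ, ‖v‖ ≤ 1 ∧ t = infDist 0 (feasibleSet A J v)} := by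
  simp only [HJ, ← sInf_norm_eq_infDist_zero]
  rfl

theorem ASurj.HJ_eq_infDist (hJ : ASurj A J) : HJ A J = infDist 0 (feasibleSet A J (-1)) := by
  rw [HJ_eq_sSup_infDist]
  refine IsGreatest.csSup_eq ⟨⟨-1, ?_, rfl⟩, ?_⟩
  · rw [pi_norm_le_iff_of_nonneg zero_le_one]
    simp
  · rintro t ⟨v, hv, rfl⟩
    have hle : -1 ≤ v := fun i => neg_le_of_abs_le ((norm_le_pi_norm v i).trans hv)
    exact infDist_le_infDist_of_subset (feasibleSet_mono A J hle) (hJ.feasibleSet_nonempty _)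

theorem HJ_empty (A : Matrix (Fin m) (Fin n) ℝ) : HJ A ∅ = 0 := by
  rw [ASurj.HJ_eq_infDist (fun _ => ⟨0, fun _ hi => hi.elim⟩), feasibleSet_empty]
  exact infDist_zero_of_mem (Set.mem_univ _)

theorem exists_aSurj_hoffA_eq_HJ (A : Matrix (Fin m) (Fin n) ℝ) :
    ∃ J, ASurj A J ∧ HoffA A = HJ A J := by
  have hne : {t | ∃ J, ASurj A J ∧ t = HJ A J}.Nonempty :=
    ⟨HJ A ∅, ∅, fun _ => ⟨0, fun _ hi => hi.elim⟩, rfl⟩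
  have hfin : {t | ∃ J, ASurj A J ∧ t = HJ A J}.Finite :=
    (Set.finite_range (HJ A)).subset fun _ ⟨J, _, ht⟩ => ⟨J, ht.symm⟩
  exact hne.csSup_mem hfin

end HoffmanConstant

/-- Proposition 1, tightness: if `H(A) > 0` then there exist `b`
with `P_{A,b} ≠ ∅` and `u ∉ P_{A,b}` such that
`dist(u, P_{A,b}) = H(A)·dist(b, Au + ℝ^m_+)`. -/
theorem hoffman_ineq_tight {m n : ℕ} (A : Matrix (Fin m) (Fin n) ℝ)
    (hH : 0 < HoffA A) :
    ∃ b : Fin m → ℝ, {x : Fin n → ℝ | ∀ i, A.mulVec x i ≤ b i}.Nonempty ∧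
      ∃ u : Fin n → ℝ, u ∉ {x : Fin n → ℝ | ∀ i, A.mulVec x i ≤ b i} ∧
        infDist u {x : Fin n → ℝ | ∀ i, A.mulVec x i ≤ b i} =
          HoffA A * infDist b
            {y : Fin m → ℝ | ∃ s : Fin m → ℝ, (∀ i, 0 ≤ s i) ∧ y = A.mulVec u + s} := by
  obtain ⟨J, hJ, hHJ⟩ := exists_aSurj_hoffA_eq_HJ A
  obtain ⟨i₀, hi₀⟩ : J.Nonempty := by
    rw [Set.nonempty_iff_ne_empty]
    rintro rfl
    exact hH.ne' (hHJ.trans (HJ_empty A))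
  obtain ⟨x', hx'S, hx'⟩ :=
    (isClosed_feasibleSet A J (-1)).exists_infDist_eq_dist (hJ.feasibleSet_nonempty (-1)) 0
  set b : Fin m → ℝ := A.mulVec x' ⊔ -1
  have hbJ : ∀ i ∈ J, b i = -1 := fun i hi => sup_eq_right.2 (hx'S i hi)
  have hx'P : x' ∈ {x : Fin n → ℝ | ∀ i, A.mulVec x i ≤ b i} := fun _ => le_sup_left
  have hPS : {x : Fin n → ℝ | ∀ i, A.mulVec x i ≤ b i} ⊆ feasibleSet A J (-1) :=
    fun x hx i hi => (hx i).trans_eq (hbJ i hi)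
  have hOrthant : {y : Fin m → ℝ | ∃ s : Fin m → ℝ, (∀ i, 0 ≤ s i) ∧ y = A.mulVec 0 + s} =
      {y | 0 ≤ y} := by
    ext y; simp [Pi.le_def]
  refine ⟨b, ⟨x', hx'P⟩, 0, fun h => ?_, ?_⟩
  · have := h i₀
    rw [mulVec_zero, hbJ i₀ hi₀] at this
    norm_num at this
  · rw [infDist_eq_dist_of_mem_of_subset hx'P hPS hx', hOrthant, infDist_setOf_nonneg,
      norm_negPart_eq_one (b := b) (fun _ => le_sup_right) (hbJ i₀ hi₀), mul_one,
      hHJ, hJ.HJ_eq_infDist, hx']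
end

section
/- Let A ∈ ℝ^{m×n}. Then for every nonempty J ∈ S(A), H_J(A) = max{ ‖v‖* : v ∈ ℝ^J_+, ‖A_Jᵀ v‖* ≤ 1 } = 1 / min{ ‖A_Jᵀ v‖* : v ∈ ℝ^J_+, ‖v‖* = 1 }. -/
open Matrix Metric

/-!
Since `‖·‖` on `Fin d → ℝ` is the sup norm, `‖·‖*` is the `ℓ¹` norm, and both sides of the first
equality are optimal values of a pair of dual linear programs. Testing the constraints
`A_J x ≤ y_J` with `y = -𝟙` against `v ∈ ℝ^J_+` gives `‖v‖* ≤ ‖A_Jᵀ v‖* ‖x‖`; with `x = x₀` a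
solution provided by `A`-surjectivity this bounds the middle supremum `S`, and with arbitrary `x`
it gives `H_J(A) ≥ S`. Conversely, if `A_J x ≤ y_J` had no solution with `‖x‖ ≤ S`, separating the compact
convex set `{y - A x : ‖x‖ ≤ S}` from the closed cone `{z : z_J ≥ 0}` would produce `v ∈ ℝ^J_+`
with `‖v‖* > S ‖A_Jᵀ v‖*`. The second equality only rescales `v`: both `‖v‖*` and `‖A_Jᵀ v‖*`
are positively homogeneous.
-/

section SupNorm

variable {ι : Type*} [Fintype ι]

lemma dotProduct_le_sum_abs_mul_norm (w x : ι → ℝ) : w ⬝ᵥ x ≤ (∑ i, |w i|) * ‖x‖ := by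
  rw [Finset.sum_mul]
  refine Finset.sum_le_sum fun i _ => (le_abs_self _).trans ?_
  rw [abs_mul]
  exact mul_le_mul_of_nonneg_left (norm_le_pi_norm x i) (abs_nonneg _)

lemma exists_norm_le_one_dotProduct_eq_sum_abs (w : ι → ℝ) :
    ∃ x : ι → ℝ, ‖x‖ ≤ 1 ∧ w ⬝ᵥ x = ∑ i, |w i| := by
  refine ⟨fun i => if 0 ≤ w i then 1 else -1, ?_, Finset.sum_congr rfl fun i _ => ?_⟩
  · refine (pi_norm_le_iff_of_nonneg zero_le_one).2 fun i => ?_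
    by_cases h : 0 ≤ w i <;> simp [h]
  · dsimp only
    split_ifs with h
    · rw [abs_of_nonneg h, mul_one]
    · rw [abs_of_neg (not_le.1 h), mul_neg_one]

end SupNorm

section DualNorm

variable {d : ℕ}

lemma dualNorm_eq_sum_abs (v : Fin d → ℝ) : dualNorm v = ∑ i, |v i| := by
  refine IsGreatest.csSup_eq ⟨?_, ?_⟩
  · obtain ⟨x, hx, hvx⟩ := exists_norm_le_one_dotProduct_eq_sum_abs v
    exact ⟨x, hx, hvx.symm⟩
  · rintro _ ⟨x, hx, rfl⟩
    calc v ⬝ᵥ x ≤ (∑ i, |v i|) * ‖x‖ := dotProduct_le_sum_abs_mul_norm v x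
      _ ≤ ∑ i, |v i| :=
        mul_le_of_le_one_right (Finset.sum_nonneg fun i _ => abs_nonneg _) hx

lemma dualNorm_nonneg (v : Fin d → ℝ) : 0 ≤ dualNorm v := by
  rw [dualNorm_eq_sum_abs]
  exact Finset.sum_nonneg fun i _ => abs_nonneg _

lemma dualNorm_eq_sum_of_nonneg {v : Fin d → ℝ} (hv : ∀ i, 0 ≤ v i) :
    dualNorm v = ∑ i, v i := by
  rw [dualNorm_eq_sum_abs]
  exact Finset.sum_congr rfl fun i _ => abs_of_nonneg (hv i)

lemma dualNorm_single_one (i : Fin d) : dualNorm (Pi.single i 1 : Fin d → ℝ) = 1 := by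
  rw [dualNorm_eq_sum_abs]
  simp [Pi.single_apply, apply_ite]

lemma dualNorm_smul_of_nonneg {c : ℝ} (hc : 0 ≤ c) (v : Fin d → ℝ) :
    dualNorm (c • v) = c * dualNorm v := by
  simp only [dualNorm_eq_sum_abs, Finset.mul_sum, Pi.smul_apply, smul_eq_mul, abs_mul,
    abs_of_nonneg hc]

lemma dualNorm_mulVec_smul_of_nonneg {k : ℕ} (B : Matrix (Fin d) (Fin k) ℝ) {c : ℝ} (hc : 0 ≤ c)
    (v : Fin k → ℝ) : dualNorm (B *ᵥ (c • v)) = c * dualNorm (B *ᵥ v) := by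
  rw [mulVec_smul, dualNorm_smul_of_nonneg hc]

lemma dotProduct_le_dualNorm_mul_norm (w x : Fin d → ℝ) : w ⬝ᵥ x ≤ dualNorm w * ‖x‖ := by
  rw [dualNorm_eq_sum_abs]
  exact dotProduct_le_sum_abs_mul_norm w x

lemma exists_norm_le_one_dotProduct_eq_dualNorm (w : Fin d → ℝ) :
    ∃ x : Fin d → ℝ, ‖x‖ ≤ 1 ∧ w ⬝ᵥ x = dualNorm w := by
  rw [dualNorm_eq_sum_abs]
  exact exists_norm_le_one_dotProduct_eq_sum_abs w

end DualNorm

section NonnegOrthant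

variable {ι κ : Type*}

/-- `ℝ^J_+`, seen inside `ℝ^ι` by extension by zero. -/
def nonnegOrthant (J : Set ι) : Set (ι → ℝ) := {v | (∀ i, 0 ≤ v i) ∧ ∀ i ∉ J, v i = 0}

variable {J : Set ι}

lemma smul_mem_nonnegOrthant {v : ι → ℝ} (hv : v ∈ nonnegOrthant J) {c : ℝ} (hc : 0 ≤ c) :
    c • v ∈ nonnegOrthant J :=
  ⟨fun i => mul_nonneg hc (hv.1 i), fun i hi => by simp [hv.2 i hi]⟩

lemma single_mem_nonnegOrthant [DecidableEq ι] {i : ι} (hi : i ∈ J) :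
    Pi.single i 1 ∈ nonnegOrthant J := by
  refine ⟨fun j => ?_, fun j hj => ?_⟩
  · by_cases h : j = i <;> simp [h]
  · simp [(ne_of_mem_of_not_mem hi hj).symm]

lemma exists_mem_nonnegOrthant_of_infeasible [Fintype ι] [Fintype κ] [DecidableEq ι] (A : Matrix ι κ ℝ) (J : Set ι)
    (y : ι → ℝ) {K : Set (κ → ℝ)} (hKconv : Convex ℝ K) (hKcomp : IsCompact K)
    (h : ∀ x ∈ K, ∃ i ∈ J, y i < (A *ᵥ x) i) :
    ∃ v ∈ nonnegOrthant J, ∀ x ∈ K, v ⬝ᵥ y < v ⬝ᵥ (A *ᵥ x) := by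
  let C : ProperCone ℝ (ι → ℝ) := (ProperCone.positive ℝ (J → ℝ)).comap
    (ContinuousLinearMap.pi fun i : J => ContinuousLinearMap.proj (i : ι))
  have hC : ∀ z, z ∈ C ↔ ∀ i ∈ J, 0 ≤ z i := by
    simp [C, Pi.le_def]
  have hK'conv : Convex ℝ ((fun x => y - A *ᵥ x) '' K) := by
    simpa [Set.image_image, sub_eq_add_neg, Matrix.neg_mulVec] using
      (hKconv.linear_image (-A).mulVecLin).translate y
  have hdisj : Disjoint ((fun x => y - A *ᵥ x) '' K) C := by
    rw [Set.disjoint_left]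
    rintro _ ⟨x, hx, rfl⟩ hmem
    obtain ⟨i, hi, hlt⟩ := h x hx
    have := (hC _).1 hmem i hi
    simp only [Pi.sub_apply, sub_nonneg] at this
    linarith
  obtain ⟨f, hfC, hfK⟩ := C.hyperplane_separation hK'conv (hKcomp.image (by fun_prop)) hdisj
  set v : ι → ℝ := fun i => f fun j => if i = j then 1 else 0
  have hf : ∀ z, f z = v ⬝ᵥ z := fun z => by
    rw [dotProduct_comm]
    exact LinearMap.pi_apply_eq_sum_univ (f : (ι → ℝ) →ₗ[ℝ] ℝ) z
  refine ⟨v, ⟨fun i => hfC _ ((hC _).2 fun j _ => ?_), fun i hi => ?_⟩, fun x hx => ?_⟩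
  · split_ifs <;> norm_num
  · have hpos := hfC _ ((hC (fun j => if i = j then 1 else 0)).2 fun j hj => by
      rw [if_neg (ne_of_mem_of_not_mem hj hi).symm])
    have hneg := hfC _ ((hC (-fun j => if i = j then 1 else 0)).2 fun j hj => by
      simp [if_neg (ne_of_mem_of_not_mem hj hi).symm])
    rw [map_neg] at hneg
    exact le_antisymm (by linarith) hpos
  · have := hfK _ ⟨x, hx, rfl⟩
    rw [hf, dotProduct_sub] at this
    linarith

end NonnegOrthant

section HomogeneousRatio

variable {V : Type*} [AddCommGroup V] [Module ℝ V] {P : Set V} {f g : V → ℝ}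

lemma le_sSup_mul_of_homogeneous {C : ℝ} (hP : ∀ v ∈ P, ∀ c : ℝ, 0 ≤ c → c • v ∈ P)
    (hf : ∀ v, ∀ c : ℝ, 0 ≤ c → f (c • v) = c * f v)
    (hg : ∀ v, ∀ c : ℝ, 0 ≤ c → g (c • v) = c * g v) (hg0 : ∀ v, 0 ≤ g v)
    (hC : ∀ v ∈ P, f v ≤ C * g v) {v : V} (hv : v ∈ P) :
    f v ≤ sSup {t | ∃ v ∈ P, g v ≤ 1 ∧ t = f v} * g v := by
  have hbdd : BddAbove {t | ∃ v ∈ P, g v ≤ 1 ∧ t = f v} := by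
    refine ⟨|C|, ?_⟩
    rintro _ ⟨w, hw, hgw, rfl⟩
    calc f w ≤ C * g w := hC w hw
      _ ≤ |C| * g w := mul_le_mul_of_nonneg_right (le_abs_self C) (hg0 w)
      _ ≤ |C| := mul_le_of_le_one_right (abs_nonneg C) hgw
  rcases (hg0 v).eq_or_lt with hgv | hgv
  · simpa [← hgv] using hC v hv
  · have hc : 0 ≤ (g v)⁻¹ := inv_nonneg.2 hgv.le
    have := le_csSup hbdd ⟨_, hP v hv _ hc, by rw [hg v _ hc, inv_mul_cancel₀ hgv.ne'], rfl⟩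
    rwa [hf v _ hc, inv_mul_le_iff₀ hgv, mul_comm] at this

lemma sSup_eq_one_div_sInf_of_homogeneous {C : ℝ} (hP : ∀ v ∈ P, ∀ c : ℝ, 0 ≤ c → c • v ∈ P)
    (hf : ∀ v, ∀ c : ℝ, 0 ≤ c → f (c • v) = c * f v)
    (hg : ∀ v, ∀ c : ℝ, 0 ≤ c → g (c • v) = c * g v) (hg0 : ∀ v, 0 ≤ g v)
    (hC : ∀ v ∈ P, f v ≤ C * g v) (hpos : ∃ v ∈ P, 0 < f v) :
    sSup {t | ∃ v ∈ P, g v ≤ 1 ∧ t = f v} = 1 / sInf {t | ∃ v ∈ P, f v = 1 ∧ t = g v} := by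
  set S := sSup {t | ∃ v ∈ P, g v ≤ 1 ∧ t = f v}
  set μ := sInf {t | ∃ v ∈ P, f v = 1 ∧ t = g v}
  have hle : ∀ v ∈ P, f v ≤ S * g v := fun v hv => le_sSup_mul_of_homogeneous hP hf hg hg0 hC hv
  obtain ⟨v₀, hv₀, hfv₀⟩ := hpos
  have hS : 0 < S := pos_of_mul_pos_left (hfv₀.trans_le (hle v₀ hv₀)) (hg0 v₀)
  have hc₀ : 0 ≤ (f v₀)⁻¹ := inv_nonneg.2 hfv₀.le
  have hμS : 1 / S ≤ μ := by
    refine le_csInf ⟨_, _, hP v₀ hv₀ _ hc₀, by rw [hf v₀ _ hc₀, inv_mul_cancel₀ hfv₀.ne'], rfl⟩ ?_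
    rintro _ ⟨v, hv, hfv, rfl⟩
    rw [div_le_iff₀ hS, mul_comm]
    exact hfv ▸ hle v hv
  have hμ : 0 < μ := (one_div_pos.2 hS).trans_le hμS
  have hbdd : BddBelow {t | ∃ v ∈ P, f v = 1 ∧ t = g v} :=
    ⟨0, by rintro _ ⟨v, -, -, rfl⟩; exact hg0 v⟩
  have hg_zero : g ((0 : ℝ) • v₀) ≤ 1 := by rw [hg v₀ 0 le_rfl, zero_mul]; exact zero_le_one
  refine le_antisymm (csSup_le ⟨_, _, hP v₀ hv₀ 0 le_rfl, hg_zero, rfl⟩ ?_)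
    ((one_div_le hS hμ).1 hμS)
  rintro _ ⟨v, hv, hgv, rfl⟩
  rcases le_or_gt (f v) 0 with hfv | hfv
  · exact hfv.trans (one_div_pos.2 hμ).le
  · have hc : 0 ≤ (f v)⁻¹ := inv_nonneg.2 hfv.le
    have := csInf_le hbdd ⟨_, hP v hv _ hc, by rw [hf v _ hc, inv_mul_cancel₀ hfv.ne'], rfl⟩
    rw [hg v _ hc, le_inv_mul_iff₀ hfv] at this
    rw [le_div_iff₀ hμ, mul_comm]
    linarith

end HomogeneousRatio

section LinearSystem

variable {m n : ℕ} (A : Matrix (Fin m) (Fin n) ℝ) {J : Set (Fin m)}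

lemma neg_dotProduct_le_of_mulVec_le {v : Fin m → ℝ} (hv : v ∈ nonnegOrthant J)
    {x : Fin n → ℝ} {y : Fin m → ℝ} (hxy : ∀ i ∈ J, (A *ᵥ x) i ≤ y i) :
    -(v ⬝ᵥ y) ≤ dualNorm (Aᵀ *ᵥ v) * ‖x‖ := by
  have hAx : v ⬝ᵥ (A *ᵥ x) ≤ v ⬝ᵥ y := Finset.sum_le_sum fun i _ => by
    by_cases hi : i ∈ J
    · exact mul_le_mul_of_nonneg_left (hxy i hi) (hv.1 i)
    · simp [hv.2 i hi]
  have hAtv : v ⬝ᵥ (A *ᵥ x) = -(Aᵀ *ᵥ v ⬝ᵥ -x) := by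
    rw [dotProduct_mulVec, mulVec_transpose, dotProduct_neg, neg_neg]
  have := dotProduct_le_dualNorm_mul_norm (Aᵀ *ᵥ v) (-x)
  rw [norm_neg] at this
  linarith

lemma dualNorm_le_of_mulVec_le_neg_one {v : Fin m → ℝ} (hv : v ∈ nonnegOrthant J)
    {x : Fin n → ℝ} (hx : ∀ i ∈ J, (A *ᵥ x) i ≤ -1) :
    dualNorm v ≤ dualNorm (Aᵀ *ᵥ v) * ‖x‖ := by
  have hvy : v ⬝ᵥ (fun _ => -1) = -dualNorm v := by
    simp [dualNorm_eq_sum_of_nonneg hv.1, dotProduct]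
  simpa [hvy] using neg_dotProduct_le_of_mulVec_le A hv hx

lemma exists_dualNorm_le_mul_dualNorm_transpose_mulVec (hJ : ASurj A J) :
    ∃ C, ∀ v ∈ nonnegOrthant J, dualNorm v ≤ C * dualNorm (Aᵀ *ᵥ v) := by
  obtain ⟨x₀, hx₀⟩ := hJ fun _ => -1
  exact ⟨‖x₀‖, fun v hv => (dualNorm_le_of_mulVec_le_neg_one A hv hx₀).trans_eq (mul_comm _ _)⟩

lemma exists_mulVec_le_of_dualNorm_le {R : ℝ} (hR : 0 ≤ R)
    (hdual : ∀ v ∈ nonnegOrthant J, dualNorm v ≤ R * dualNorm (Aᵀ *ᵥ v))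
    {y : Fin m → ℝ} (hy : ‖y‖ ≤ 1) :
    ∃ x : Fin n → ℝ, (∀ i ∈ J, (A *ᵥ x) i ≤ y i) ∧ ‖x‖ ≤ R := by
  by_contra! hinf
  obtain ⟨v, hv, hvK⟩ := exists_mem_nonnegOrthant_of_infeasible A J y
    (convex_closedBall 0 R) (isCompact_closedBall 0 R) fun x hx => by
      by_contra! hxy
      exact (hinf x hxy).not_ge (mem_closedBall_zero_iff.1 hx)
  obtain ⟨σ, hσ, hAσ⟩ := exists_norm_le_one_dotProduct_eq_dualNorm (Aᵀ *ᵥ v)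
  have hRσ : -(R • σ) ∈ closedBall (0 : Fin n → ℝ) R := by
    rw [mem_closedBall_zero_iff, norm_neg, norm_smul, Real.norm_of_nonneg hR]
    exact mul_le_of_le_one_right hR hσ
  have hlt : v ⬝ᵥ y < -(R * dualNorm (Aᵀ *ᵥ v)) := by
    have := hvK _ hRσ
    rwa [dotProduct_mulVec, ← mulVec_transpose, dotProduct_neg, dotProduct_smul, hAσ,
      smul_eq_mul] at this
  have hvy : -(v ⬝ᵥ y) ≤ dualNorm v := by
    have := dotProduct_le_dualNorm_mul_norm v (-y)
    rw [norm_neg, dotProduct_neg] at this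
    exact this.trans (mul_le_of_le_one_right (dualNorm_nonneg v) hy)
  linarith [hdual v hv]

lemma HJ_eq_of_exists_mulVec_le {S : ℝ}
    (hle : ∀ y : Fin m → ℝ, ‖y‖ ≤ 1 → ∃ x, (∀ i ∈ J, (A *ᵥ x) i ≤ y i) ∧ ‖x‖ ≤ S)
    {y₀ : Fin m → ℝ} (hy₀ : ‖y₀‖ ≤ 1) (hge : ∀ x, (∀ i ∈ J, (A *ᵥ x) i ≤ y₀ i) → S ≤ ‖x‖) :
    HJ A J = S := by
  set g : (Fin m → ℝ) → ℝ :=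
    fun y => sInf {r | ∃ x : Fin n → ℝ, (∀ i ∈ J, A.mulVec x i ≤ y i) ∧ r = ‖x‖}
  have hg : ∀ y, ‖y‖ ≤ 1 → g y ≤ S := fun y hy => by
    obtain ⟨x, hx, hxS⟩ := hle y hy
    have hbdd : BddBelow {r | ∃ x : Fin n → ℝ, (∀ i ∈ J, A.mulVec x i ≤ y i) ∧ r = ‖x‖} :=
      ⟨0, by rintro _ ⟨x, -, rfl⟩; exact norm_nonneg x⟩
    exact (csInf_le hbdd ⟨x, hx, rfl⟩).trans hxS
  have hg₀ : S ≤ g y₀ := by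
    obtain ⟨x, hx, -⟩ := hle y₀ hy₀
    exact le_csInf ⟨_, x, hx, rfl⟩ fun _ ⟨x, hx, hr⟩ => hr ▸ hge x hx
  refine le_antisymm (csSup_le ⟨_, y₀, hy₀, rfl⟩ fun _ ⟨y, hy, ht⟩ => ht ▸ hg y hy) ?_
  exact le_csSup_of_le ⟨S, fun _ ⟨y, hy, ht⟩ => ht ▸ hg y hy⟩ ⟨y₀, hy₀, rfl⟩ hg₀

lemma HJ_eq_sSup_dualNorm {C : ℝ}
    (hC : ∀ v ∈ nonnegOrthant J, dualNorm v ≤ C * dualNorm (Aᵀ *ᵥ v)) :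
    HJ A J = sSup {t | ∃ v ∈ nonnegOrthant J, dualNorm (Aᵀ *ᵥ v) ≤ 1 ∧ t = dualNorm v} := by
  set S := sSup {t | ∃ v ∈ nonnegOrthant J, dualNorm (Aᵀ *ᵥ v) ≤ 1 ∧ t = dualNorm v}
  have hS : 0 ≤ S := Real.sSup_nonneg fun _ ⟨v, _, _, ht⟩ => ht ▸ dualNorm_nonneg v
  have hle : ∀ v ∈ nonnegOrthant J, dualNorm v ≤ S * dualNorm (Aᵀ *ᵥ v) := fun v hv =>
    le_sSup_mul_of_homogeneous (fun v hv c hc => smul_mem_nonnegOrthant hv hc)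
      (fun v c hc => dualNorm_smul_of_nonneg hc v)
      (fun v c hc => dualNorm_mulVec_smul_of_nonneg Aᵀ hc v) (fun _ => dualNorm_nonneg _)
      hC hv
  refine HJ_eq_of_exists_mulVec_le A (fun y hy => exists_mulVec_le_of_dualNorm_le A hS hle hy)
    (y₀ := fun _ => -1) (by simp [pi_norm_le_iff_of_nonneg]) fun x hx => ?_
  refine csSup_le ⟨_, 0, ⟨fun _ => le_rfl, fun _ _ => rfl⟩, by simp [dualNorm_eq_sum_abs], rfl⟩ ?_
  rintro _ ⟨v, hv, hAv, rfl⟩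
  exact (dualNorm_le_of_mulVec_le_neg_one A hv hx).trans
    (mul_le_of_le_one_left (norm_nonneg x) hAv)

end LinearSystem

/-- Proposition 2, first part: for every nonempty `J ∈ S(A)`,
`H_J(A) = max{‖v‖* : v ∈ ℝ^J_+, ‖A_Jᵀ v‖* ≤ 1} = 1 / min{‖A_Jᵀ v‖* : v ∈ ℝ^J_+, ‖v‖* = 1}`.
Vectors `v ∈ ℝ^J` are rendered as vectors in `ℝ^m` vanishing outside `J`. -/
theorem hoffman_HJ_dual {m n : ℕ} (A : Matrix (Fin m) (Fin n) ℝ)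
    (J : Set (Fin m)) (hJ : ASurj A J) (hne : J.Nonempty) :
    HJ A J = sSup {t | ∃ v : Fin m → ℝ, (∀ i, 0 ≤ v i) ∧ (∀ i ∉ J, v i = 0) ∧
        dualNorm (A.transpose.mulVec v) ≤ 1 ∧ t = dualNorm v} ∧
    HJ A J = 1 / sInf {t | ∃ v : Fin m → ℝ, (∀ i, 0 ≤ v i) ∧ (∀ i ∉ J, v i = 0) ∧
        dualNorm v = 1 ∧ t = dualNorm (A.transpose.mulVec v)} := by
  obtain ⟨C, hC⟩ := exists_dualNorm_le_mul_dualNorm_transpose_mulVec A hJ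
  obtain ⟨i, hi⟩ := hne
  have hHJ := HJ_eq_sSup_dualNorm A hC
  have hratio := sSup_eq_one_div_sInf_of_homogeneous
    (fun v hv c hc => smul_mem_nonnegOrthant hv hc) (fun v c hc => dualNorm_smul_of_nonneg hc v)
    (fun v c hc => dualNorm_mulVec_smul_of_nonneg Aᵀ hc v) (fun _ => dualNorm_nonneg _)
    hC ⟨_, single_mem_nonnegOrthant hi, by rw [dualNorm_single_one]; exact one_pos⟩
  simp only [nonnegOrthant, Set.mem_ofPred_eq, and_assoc] at hHJ hratio
  exact ⟨hHJ, hHJ.trans hratio⟩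
end

section
/- Let A ∈ ℝ^{m×n}. Suppose 𝓕 ⊆ S(A) and 𝓘 ⊆ 2^{{1,…,m}} \ S(A) are such that for every J ⊆ {1,…,m}, either J ⊆ F for some F ∈ 𝓕, or I ⊆ J for some I ∈ 𝓘. Then H(A) = max_{F∈𝓕} H_F(A). -/
open Matrix Metric

/-!
For `J ∈ S(A)` the value `H_J(A)` is finite: solving `A_J p_i ≤ e_i` and `A_J q_i ≤ -e_i` once
and combining with the positive and negative parts of `v` solves `A_J x ≤ v_J` with
`‖x‖ ≤ C ‖v‖`. Dropping constraints can only shrink `min {‖x‖ : A_J x ≤ v_J}`, so `H_J(A)` is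
monotone in `J` on `S(A)`, and `S(A)` is closed under subsets. Hence every `J ∈ S(A)` lies in some
`F ∈ 𝓕` (it cannot contain a non-surjective `I ∈ 𝓘`), and `H_J(A) ≤ H_F(A)`.
-/

section

variable {m n : ℕ} {A : Matrix (Fin m) (Fin n) ℝ} {J K : Set (Fin m)}

noncomputable def minSolutionNorm (A : Matrix (Fin m) (Fin n) ℝ) (J : Set (Fin m))
    (v : Fin m → ℝ) : ℝ :=
  sInf {r | ∃ x : Fin n → ℝ, (∀ i ∈ J, A.mulVec x i ≤ v i) ∧ r = ‖x‖}

lemma HJ_def (A : Matrix (Fin m) (Fin n) ℝ) (J : Set (Fin m)) :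
    HJ A J = sSup {t | ∃ v : Fin m → ℝ, ‖v‖ ≤ 1 ∧ t = minSolutionNorm A J v} :=
  rfl

lemma ASurj.subset (hK : ASurj A K) (hJK : J ⊆ K) : ASurj A J := fun w =>
  let ⟨x, hx⟩ := hK w
  ⟨x, fun i hi => hx i (hJK hi)⟩

lemma ASurj.exists_solution_norm_le (hJ : ASurj A J) :
    ∃ C, ∀ v : Fin m → ℝ, ∃ x, (∀ i ∈ J, A.mulVec x i ≤ v i) ∧ ‖x‖ ≤ C * ‖v‖ := by
  choose p hp using fun i => hJ (Pi.single i 1)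
  choose q hq using fun i => hJ (-Pi.single i 1)
  refine ⟨∑ i, (‖p i‖ + ‖q i‖), fun v => ⟨∑ i, ((v i)⁺ • p i + (v i)⁻ • q i), ?_, ?_⟩⟩
  · intro j hj
    have hterm : ∀ i, (v i)⁺ * A.mulVec (p i) j + (v i)⁻ * A.mulVec (q i) j ≤
        ((v i)⁺ - (v i)⁻) * (Pi.single i 1 : Fin m → ℝ) j := by
      intro i
      have hqj : A.mulVec (q i) j ≤ -(Pi.single i 1 : Fin m → ℝ) j := hq i j hj
      nlinarith [hp i j hj, posPart_nonneg (v i), negPart_nonneg (v i)]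
    calc A.mulVec (∑ i, ((v i)⁺ • p i + (v i)⁻ • q i)) j
        = ∑ i, ((v i)⁺ * A.mulVec (p i) j + (v i)⁻ * A.mulVec (q i) j) := by
          simp [Matrix.mulVec_sum, Matrix.mulVec_add, Matrix.mulVec_smul, Finset.sum_apply]
      _ ≤ ∑ i, ((v i)⁺ - (v i)⁻) * (Pi.single i 1 : Fin m → ℝ) j :=
          Finset.sum_le_sum fun i _ => hterm i
      _ = v j := by simp [Pi.single_apply, posPart_sub_negPart]
  · have hcoef : ∀ i, (v i)⁺ + (v i)⁻ ≤ ‖v‖ := fun i => by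
      simpa [posPart_add_negPart] using norm_le_pi_norm v i
    calc ‖∑ i, ((v i)⁺ • p i + (v i)⁻ • q i)‖
        ≤ ∑ i, ((v i)⁺ * ‖p i‖ + (v i)⁻ * ‖q i‖) := by
          refine (norm_sum_le _ _).trans (Finset.sum_le_sum fun i _ => (norm_add_le _ _).trans ?_)
          simp [norm_smul, abs_of_nonneg (posPart_nonneg (v i)),
            abs_of_nonneg (negPart_nonneg (v i))]
      _ ≤ ∑ i, ‖v‖ * (‖p i‖ + ‖q i‖) := Finset.sum_le_sum fun i _ => by
          nlinarith [hcoef i, posPart_nonneg (v i), negPart_nonneg (v i), norm_nonneg (p i),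
            norm_nonneg (q i)]
      _ = (∑ i, (‖p i‖ + ‖q i‖)) * ‖v‖ := by rw [← Finset.mul_sum, mul_comm]

lemma minSolutionNorm_le {v : Fin m → ℝ} {x : Fin n → ℝ} (hx : ∀ i ∈ J, A.mulVec x i ≤ v i) :
    minSolutionNorm A J v ≤ ‖x‖ :=
  csInf_le ⟨0, by rintro _ ⟨y, -, rfl⟩; exact norm_nonneg y⟩ ⟨x, hx, rfl⟩

lemma minSolutionNorm_mono (hK : ASurj A K) (hJK : J ⊆ K) (v : Fin m → ℝ) :
    minSolutionNorm A J v ≤ minSolutionNorm A K v := by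
  obtain ⟨x, hx⟩ := hK v
  refine le_csInf ⟨‖x‖, x, hx, rfl⟩ ?_
  rintro _ ⟨y, hy, rfl⟩
  exact minSolutionNorm_le fun i hi => hy i (hJK hi)

lemma ASurj.bddAbove_minSolutionNorm (hK : ASurj A K) :
    BddAbove {t | ∃ v : Fin m → ℝ, ‖v‖ ≤ 1 ∧ t = minSolutionNorm A K v} := by
  obtain ⟨C, hC⟩ := hK.exists_solution_norm_le
  refine ⟨max C 0, ?_⟩
  rintro _ ⟨v, hv, rfl⟩
  obtain ⟨x, hx, hxC⟩ := hC v
  calc minSolutionNorm A K v ≤ ‖x‖ := minSolutionNorm_le hx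
    _ ≤ C * ‖v‖ := hxC
    _ ≤ max C 0 * 1 := by gcongr; exact le_max_left C 0
    _ = max C 0 := mul_one _

lemma HJ_mono (hK : ASurj A K) (hJK : J ⊆ K) : HJ A J ≤ HJ A K := by
  rw [HJ_def, HJ_def]
  refine csSup_le ⟨_, 0, by simp, rfl⟩ ?_
  rintro _ ⟨v, hv, rfl⟩
  exact le_csSup_of_le hK.bddAbove_minSolutionNorm ⟨v, hv, rfl⟩ (minSolutionNorm_mono hK hJK v)

end

/-- Corollary 1: if `𝓕 ⊆ S(A)` and `𝓘 ⊆ 2^{1..m} \ S(A)` jointly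
certify all subsets of `{1,…,m}`, then `H(A) = max_{F ∈ 𝓕} H_F(A)`. -/
theorem hoffman_certificates {m n : ℕ} (A : Matrix (Fin m) (Fin n) ℝ)
    (F I : Set (Set (Fin m)))
    (hF : ∀ J ∈ F, ASurj A J) (hI : ∀ J ∈ I, ¬ ASurj A J)
    (hcover : ∀ J : Set (Fin m), (∃ F' ∈ F, J ⊆ F') ∨ (∃ I' ∈ I, I' ⊆ J)) :
    HoffA A = sSup {t | ∃ F' ∈ F, t = HJ A F'} := by
  refine csSup_eq_csSup_of_forall_exists_le ?_ ?_
  · rintro _ ⟨J, hJ, rfl⟩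
    rcases hcover J with ⟨F', hF', hJF'⟩ | ⟨I', hI', hI'J⟩
    · exact ⟨_, ⟨F', hF', rfl⟩, HJ_mono (hF F' hF') hJF'⟩
    · exact absurd (hJ.subset hI'J) (hI I' hI')
  · rintro _ ⟨F', hF', rfl⟩
    exact ⟨_, ⟨F', hF F' hF', rfl⟩, le_rfl⟩
end

section
/- Let A ∈ ℝ^{m×n} and L ⊆ {1,…,m}. For all b ∈ ℝ^m such that P_{A,b} := {x ∈ ℝ^n : Ax ≤ b} is nonempty and all u ∈ ℝ^n with A_{L^c} u ≤ b_{L^c}, dist(u, P_{A,b}) ≤ H(A|L) · dist_L(b, Au + ℝ^m_+) ≤ H(A|L) · ‖(A_L u − b_L)_+‖. -/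
open Matrix Metric
open scoped Classical

/-- `H_J(A|L) = max_{y ∈ ℝ^L, ‖y‖ ≤ 1} min{‖x‖ : A_J x ≤ y_J}`, with the
convention `y_j = 0` for `j ∉ L`. -/
noncomputable def HJL {m n : ℕ} (A : Matrix (Fin m) (Fin n) ℝ) (L J : Set (Fin m)) : ℝ :=
  sSup {t | ∃ y : Fin m → ℝ, (∀ i ∉ L, y i = 0) ∧ ‖y‖ ≤ 1 ∧
    t = sInf {r | ∃ x : Fin n → ℝ, (∀ i ∈ J, A.mulVec x i ≤ y i) ∧ r = ‖x‖}}

/-- The Hoffman constant `H(A|L) = max_{J ∈ S(A)} H_J(A|L)`. -/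
noncomputable def HoffAL {m n : ℕ} (A : Matrix (Fin m) (Fin n) ℝ) (L : Set (Fin m)) : ℝ :=
  sSup {t | ∃ J : Set (Fin m), ASurj A J ∧ t = HJL A L J}

/-- `dist_L(b, S) = inf{‖b − y‖ : y ∈ S, (b − y)_{L^c} = 0}`. -/
noncomputable def distL {m : ℕ} (L : Set (Fin m)) (b : Fin m → ℝ)
    (S : Set (Fin m → ℝ)) : ℝ :=
  sInf {r | ∃ y ∈ S, (∀ i ∉ L, b i - y i = 0) ∧ r = ‖b - y‖}

/-!
A norm-one functional separating `u` from the convex set `P = {x | A x ≤ b}` is, by Farkas' lemma,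
of the form `μᵀ A` with `μ ≥ 0` and `μᵀ b` bounded so that `dist(u, P) ≤ μᵀ (A u - b)`.
A Carathéodory-type exchange shrinks the support `J` of `μ` until `J` is `A`-surjective. If
`A u ≤ b + v` with `v` vanishing off `L`, then `μᵀ (A u - b) ≤ μᵀ v`, and every `x` with
`A_J x ≤ -v_J / ‖v‖` satisfies `-‖x‖ ≤ μᵀ A x ≤ -μᵀ v / ‖v‖`; so `μᵀ v ≤ H_J(A|L) ‖v‖`.
Every `y ∈ A u + ℝ^m_+` with `(b - y)_{L^c} = 0` yields such a `v = y - b`, and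
`y = b + (A_L u - b_L)_+` is one of them, which gives the second inequality.
-/

section Conic

variable {ι : Type*} [Fintype ι]

theorem exists_nonneg_sub_smul_support_ssubset {μ ν : ι → ℝ} (hμ : 0 ≤ μ)
    (hν : ∀ i, μ i = 0 → ν i = 0) (hpos : ∃ i, 0 < ν i) :
    ∃ t : ℝ, 0 ≤ t ∧ 0 ≤ μ - t • ν ∧ Function.support (μ - t • ν) ⊂ Function.support μ := by
  obtain ⟨i₀, hi₀, hmin⟩ := Finset.exists_min_image {i | 0 < ν i} (fun i => μ i / ν i)
    (by simpa [Finset.filter_nonempty_iff] using hpos)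
  simp only [Finset.mem_filter_univ] at hi₀ hmin
  have hle : ∀ i, μ i₀ / ν i₀ * ν i ≤ μ i := fun i => by
    rcases lt_or_ge 0 (ν i) with h | h
    · exact (le_div_iff₀ h).1 (hmin i h)
    · exact (mul_nonpos_of_nonneg_of_nonpos (div_nonneg (hμ i₀) hi₀.le) h).trans (hμ i)
  refine ⟨μ i₀ / ν i₀, div_nonneg (hμ i₀) hi₀.le, fun i => by simpa using hle i,
    Set.ssubset_iff_subset_ne.2 ⟨fun i hi h0 => hi ?_, fun h => ?_⟩⟩
  · simp [h0, hν i h0]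
  · have hi₀μ : i₀ ∈ Function.support μ := fun h0 => hi₀.ne' (hν i₀ h0)
    rw [← h] at hi₀μ
    exact hi₀μ (by simp [div_mul_cancel₀ _ hi₀.ne'])

theorem exists_nonneg_of_support_descent (I Q : (ι → ℝ) → Prop)
    (step : ∀ μ, 0 ≤ μ → I μ → ¬ Q μ → ∃ ν : ι → ℝ, (∀ i, μ i = 0 → ν i = 0) ∧
      (∃ i, 0 < ν i) ∧ ∀ t : ℝ, 0 ≤ t → I (μ - t • ν))
    {μ : ι → ℝ} (hμ : 0 ≤ μ) (hI : I μ) : ∃ μ', 0 ≤ μ' ∧ I μ' ∧ Q μ' := by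
  induction hS : Function.support μ using WellFoundedLT.induction generalizing μ with
  | _ S IH =>
  by_cases hQ : Q μ
  · exact ⟨μ, hμ, hI, hQ⟩
  obtain ⟨ν, hsupp, hpos, hIν⟩ := step μ hμ hI hQ
  obtain ⟨t, ht, hμ', hlt⟩ := exists_nonneg_sub_smul_support_ssubset hμ hsupp hpos
  exact IH _ (hS ▸ hlt) hμ' (hIν t ht) rfl

variable {F : Type*} [AddCommGroup F] [Module ℝ F]

theorem exists_nonneg_map_eq_injOn_support (T : (ι → ℝ) →ₗ[ℝ] F) {μ : ι → ℝ} (hμ : 0 ≤ μ) :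
    ∃ μ', 0 ≤ μ' ∧ T μ' = T μ ∧ ∀ ν, (∀ i, μ' i = 0 → ν i = 0) → T ν = 0 → ν = 0 := by
  refine exists_nonneg_of_support_descent (fun μ' => T μ' = T μ) _ (fun μ' _ hI hQ => ?_) hμ rfl
  push Not at hQ
  obtain ⟨ν, hsupp, hTν, hν⟩ := hQ
  obtain ⟨i, hi⟩ := Function.ne_iff.1 hν
  have hI' : ∀ ν', T ν' = 0 → ∀ t : ℝ, 0 ≤ t → T (μ' - t • ν') = T μ := fun ν' h t _ => by
    simp [hI, h]
  rcases hi.lt_or_gt with hneg | hpos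
  · exact ⟨-ν, fun j hj => by simp [hsupp j hj], ⟨i, by simpa using hneg⟩, hI' _ (by simp [hTν])⟩
  · exact ⟨ν, hsupp, ⟨i, hpos⟩, hI' _ hTν⟩

theorem isClosed_image_Ici_zero [TopologicalSpace F] [IsTopologicalAddGroup F]
    [ContinuousSMul ℝ F] [T2Space F] (T : (ι → ℝ) →ₗ[ℝ] F) : IsClosed (T '' Set.Ici 0) := by
  let V (S : Set ι) : Submodule ℝ (ι → ℝ) := Submodule.pi Sᶜ fun _ => ⊥
  have hV : ∀ S ν, ν ∈ V S ↔ ∀ i ∉ S, ν i = 0 := fun S ν => by simp [V, Submodule.mem_pi]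
  -- Carathéodory: the cone is covered by the images of the orthant faces on which `T` is injective
  have hcover : T '' Set.Ici 0 =
      ⋃ (S : Set ι) (_ : ∀ ν ∈ V S, T ν = 0 → ν = 0), T '' (V S ∩ Set.Ici 0) := by
    refine Set.Subset.antisymm ?_
      (Set.iUnion₂_subset fun S _ => Set.image_mono Set.inter_subset_right)
    rintro _ ⟨μ, hμ, rfl⟩
    obtain ⟨μ', hμ', hTμ, hinj⟩ := exists_nonneg_map_eq_injOn_support T hμ
    refine Set.mem_iUnion₂.2
      ⟨Function.support μ', fun ν hν => hinj ν fun i hi => ?_, μ', ⟨?_, hμ'⟩, hTμ⟩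
    · exact (hV _ _).1 hν i (by simpa using hi)
    · exact (hV _ _).2 fun i hi => by simpa using hi
  rw [hcover]
  refine isClosed_iUnion_of_finite fun S => isClosed_iUnion_of_finite fun hS => ?_
  have hemb : Topology.IsClosedEmbedding (T.domRestrict (V S)) :=
    LinearMap.isClosedEmbedding_of_injective <| (LinearMap.ker_eq_bot').2 fun ν hν =>
      Subtype.ext (hS ν ν.2 hν)
  have himage : T '' (V S ∩ Set.Ici 0) =
      T.domRestrict (V S) '' (((↑) : V S → ι → ℝ) ⁻¹' Set.Ici 0) := by
    rw [← Subtype.image_preimage_coe, ← Set.image_comp]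
    rfl
  rw [himage]
  exact hemb.isClosedMap _ (isClosed_Ici.preimage continuous_subtype_val)

end Conic

theorem ContinuousLinearMap.apply_eq_dotProduct {κ : Type*} [Fintype κ] (f : (κ → ℝ) →L[ℝ] ℝ)
    (x : κ → ℝ) :
    f x = x ⬝ᵥ fun j => f (Pi.single j 1) := by
  conv_lhs => rw [← Finset.univ_sum_single x]
  refine (map_sum f _ _).trans (Finset.sum_congr rfl fun j _ => ?_)
  rw [← smul_eq_mul, ← map_smul, ← Pi.single_smul', smul_eq_mul, mul_one]

namespace Matrix

variable {ι κ : Type*} [Fintype ι] [Fintype κ]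

theorem farkas (B : Matrix ι κ ℝ) (g : κ → ℝ) :
    (∃ μ, 0 ≤ μ ∧ μ ᵥ* B = g) ∨ ∃ z, 0 ≤ B *ᵥ z ∧ g ⬝ᵥ z < 0 := by
  by_cases h : ∃ μ, 0 ≤ μ ∧ μ ᵥ* B = g
  · exact .inl h
  let C : ProperCone ℝ (κ → ℝ) :=
    ⟨(PointedCone.positive ℝ (ι → ℝ)).map B.vecMulLinear, isClosed_image_Ici_zero _⟩
  obtain ⟨f, hf, hfg⟩ := C.hyperplane_separation_point (x₀ := g) fun ⟨μ, hμ, hμg⟩ => h ⟨μ, hμ, hμg⟩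
  refine .inr ⟨fun j => f (Pi.single j 1), fun i => ?_, by rwa [← f.apply_eq_dotProduct]⟩
  have := hf (B i) ⟨Pi.single i 1, by simp, single_one_vecMul i B⟩
  rwa [f.apply_eq_dotProduct] at this

theorem farkas_ineq (A : Matrix ι κ ℝ) (b : ι → ℝ) (c : κ → ℝ) (d : ℝ) :
    (∃ μ, 0 ≤ μ ∧ μ ᵥ* A = c ∧ μ ⬝ᵥ b ≤ d) ∨
      ∃ x t, 0 ≤ t ∧ A *ᵥ x ≤ t • b ∧ t * d < c ⬝ᵥ x := by
  -- homogenize: the rows `(Aᵢ, bᵢ)` and `(0, 1)`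
  rcases farkas (fromBlocks A (replicateCol Unit b) 0 (1 : Matrix Unit Unit ℝ))
      (Sum.elim c fun _ => d) with
    ⟨μ, hμ, hμg⟩ | ⟨z, hz, hzg⟩
  · have hd : μ ∘ Sum.inl ⬝ᵥ b + μ (.inr ()) = d := by
      simpa [vecMul, dotProduct, Fintype.sum_sum_type] using congr_fun hμg (.inr ())
    refine .inl ⟨μ ∘ Sum.inl, fun i => hμ _, funext fun j => ?_,
      by linarith [show 0 ≤ μ (.inr ()) from hμ _]⟩
    simpa [vecMul, dotProduct, Fintype.sum_sum_type] using congr_fun hμg (.inl j)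
  · have hrow : ∀ i, 0 ≤ (A *ᵥ (z ∘ Sum.inl)) i + b i * z (.inr ()) := fun i => by
      simpa [mulVec, dotProduct, Fintype.sum_sum_type] using hz (.inl i)
    have ht : 0 ≤ z (.inr ()) := by
      simpa [mulVec, dotProduct, Fintype.sum_sum_type] using hz (.inr ())
    have hg : c ⬝ᵥ (z ∘ Sum.inl) + d * z (.inr ()) < 0 := by
      simpa [dotProduct, Fintype.sum_sum_type] using hzg
    refine .inr ⟨-(z ∘ Sum.inl), z (.inr ()), ht, fun i => ?_, ?_⟩
    · simp only [mulVec_neg, Pi.neg_apply, Pi.smul_apply, smul_eq_mul]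
      linarith [hrow i]
    · rw [dotProduct_neg]
      linarith

theorem exists_nonneg_vecMul_eq_of_forall_dotProduct_le (A : Matrix ι κ ℝ) (b : ι → ℝ)
    (hP : ∃ x, A *ᵥ x ≤ b) (c : κ → ℝ) (d : ℝ) (h : ∀ x, A *ᵥ x ≤ b → c ⬝ᵥ x ≤ d) :
    ∃ μ, 0 ≤ μ ∧ μ ᵥ* A = c ∧ μ ⬝ᵥ b ≤ d := by
  refine (farkas_ineq A b c d).resolve_right ?_
  rintro ⟨x, t, ht, hx, hcx⟩
  obtain ⟨x₀, hx₀⟩ := hP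
  -- the points `(1 + s t)⁻¹ (x₀ + s x)`, `s ≥ 0`, satisfy `A y ≤ b`, and `c` is unbounded on them
  set s := (|c ⬝ᵥ x₀ - d| + 1) / (c ⬝ᵥ x - t * d)
  have hs : 0 ≤ s := div_nonneg (by positivity) (by linarith)
  have hst : 0 < 1 + s * t := by positivity
  have hfeas : A *ᵥ ((1 + s * t)⁻¹ • (x₀ + s • x)) ≤ b := fun i => by
    have := add_le_add (hx₀ i) (mul_le_mul_of_nonneg_left (hx i) hs)
    simp only [mulVec_smul, mulVec_add, Pi.smul_apply, Pi.add_apply, smul_eq_mul] at this ⊢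
    rw [inv_mul_le_iff₀ hst]
    linarith
  have hval := h _ hfeas
  rw [dotProduct_smul, dotProduct_add, dotProduct_smul, smul_eq_mul, smul_eq_mul,
    inv_mul_le_iff₀ hst] at hval
  have hsδ : s * (c ⬝ᵥ x - t * d) = |c ⬝ᵥ x₀ - d| + 1 := div_mul_cancel₀ _ (by linarith)
  nlinarith [neg_abs_le (c ⬝ᵥ x₀ - d)]

theorem exists_nonneg_vecMul_eq_zero_of_not_exists_mulVec_le (A : Matrix ι κ ℝ) (w : ι → ℝ)
    (h : ¬ ∃ x, A *ᵥ x ≤ w) : ∃ ν, 0 ≤ ν ∧ ν ᵥ* A = 0 ∧ ν ⬝ᵥ w < 0 := by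
  rcases farkas_ineq A w 0 (-1) with ⟨ν, hν, hνA, hνw⟩ | ⟨x, t, ht, hx, htx⟩
  · exact ⟨ν, hν, hνA, by linarith⟩
  · have ht : 0 < t := by simpa using htx
    refine absurd ⟨t⁻¹ • x, ?_⟩ h
    rw [mulVec_smul, ← inv_smul_smul₀ ht.ne' w]
    exact smul_le_smul_of_nonneg_left hx (inv_nonneg.2 ht.le)

end Matrix

theorem exists_norm_le_one_infDist_le {E : Type*} [NormedAddCommGroup E] [NormedSpace ℝ E]
    {P : Set E} (hP : Convex ℝ P) (u : E) :
    ∃ f : StrongDual ℝ E, ‖f‖ ≤ 1 ∧ ∀ x ∈ P, infDist u P ≤ f (u - x) := by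
  set r := infDist u P
  rcases le_or_gt r 0 with hr | hr
  · exact ⟨0, by simp, fun x _ => by simpa using hr⟩
  obtain ⟨x₀, hx₀⟩ : P.Nonempty := Set.nonempty_iff_ne_empty.2 fun h => by
    simp [r, h] at hr
  have hdisj : Disjoint (ball u r) P :=
    Set.disjoint_left.2 fun x hx hxP => (mem_ball'.1 hx).not_ge (infDist_le_dist_of_mem hxP)
  obtain ⟨f, s, hball, hsP⟩ := geometric_hahn_banach_open (convex_ball u r) isOpen_ball hP hdisj
  have hclosed : ∀ z ∈ closedBall u r, f z ≤ s := by
    rw [← closure_ball u hr.ne']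
    exact closure_minimal (fun z hz => (hball z hz).le) (isClosed_le f.continuous continuous_const)
  have hnorm : ‖f‖ * r ≤ s - f u := by
    refine (le_div_iff₀ hr).1 (f.opNorm_bound_of_ball_bound hr _ fun z hz => ?_)
    have h₁ := hclosed (u + z) (by simpa using hz)
    have h₂ := hclosed (u - z) (by simpa using hz)
    rw [map_add] at h₁
    rw [map_sub] at h₂
    rw [Real.norm_eq_abs, abs_le]
    constructor <;> linarith
  have hf : 0 < ‖f‖ := norm_pos_iff.2 fun hf0 => by
    have := (hball u (mem_ball_self hr)).trans_le (hsP x₀ hx₀)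
    simp [hf0] at this
  refine ⟨-‖f‖⁻¹ • f, by simp [norm_smul, hf.ne'], fun x hx => ?_⟩
  calc r ≤ ‖f‖⁻¹ * (f x - f u) := by
        rw [le_inv_mul_iff₀ hf]
        linarith [hsP x hx]
    _ = (-‖f‖⁻¹ • f) (u - x) := by simp only [_root_.smul_apply, map_sub, smul_eq_mul]; ring

section Hoffman

variable {m n : ℕ} (A : Matrix (Fin m) (Fin n) ℝ)

theorem aSurj_of_forall_mulVec_le_neg_one {J : Set (Fin m)} {x : Fin n → ℝ}
    (hx : ∀ i ∈ J, (A *ᵥ x) i ≤ -1) : ASurj A J := fun w => by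
  refine ⟨(∑ j, |w j|) • x, fun i hi => ?_⟩
  have hw : |w i| ≤ ∑ j, |w j| :=
    Finset.single_le_sum (fun j _ => abs_nonneg (w j)) (Finset.mem_univ i)
  rw [mulVec_smul, Pi.smul_apply, smul_eq_mul]
  nlinarith [hx i hi, neg_abs_le (w i), abs_nonneg (w i)]

theorem exists_nonneg_vecMul_eq_aSurj_support (b : Fin m → ℝ) (hP : ∃ x, A *ᵥ x ≤ b)
    {c : Fin n → ℝ} {d : ℝ} {μ₀ : Fin m → ℝ} (hμ₀ : 0 ≤ μ₀) (hμ₀A : μ₀ ᵥ* A = c)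
    (hμ₀b : μ₀ ⬝ᵥ b ≤ d) :
    ∃ μ', 0 ≤ μ' ∧ (μ' ᵥ* A = c ∧ μ' ⬝ᵥ b ≤ d) ∧ ASurj A {i | μ' i ≠ 0} := by
  refine exists_nonneg_of_support_descent (fun μ => μ ᵥ* A = c ∧ μ ⬝ᵥ b ≤ d)
    (fun μ => ASurj A {i | μ i ≠ 0}) (fun μ hμ ⟨hμA, hμb⟩ hJ => ?_) hμ₀ ⟨hμ₀A, hμ₀b⟩
  have hinfeas : ¬ ∃ x, (diagonal μ * A) *ᵥ x ≤ -μ := fun ⟨x, hx⟩ =>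
    hJ <| aSurj_of_forall_mulVec_le_neg_one A (x := x) fun i hi => by
      have := hx i
      rw [← mulVec_mulVec, mulVec_diagonal, Pi.neg_apply] at this
      exact le_of_mul_le_mul_left (by linarith) (lt_of_le_of_ne (hμ i) (Ne.symm hi))
  obtain ⟨ν, hν, hνA, hνμ⟩ := exists_nonneg_vecMul_eq_zero_of_not_exists_mulVec_le _ _ hinfeas
  -- reweighted by `μ`, the certificate `ν` is a direction in `ker Aᵀ` supported in `supp μ`
  set ν' := ν ᵥ* diagonal μ
  have hν' : 0 ≤ ν' := fun i => by simpa [ν', vecMul_diagonal] using mul_nonneg (hν i) (hμ i)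
  have hν'A : ν' ᵥ* A = 0 := by rw [vecMul_vecMul, hνA]
  have hν'b : 0 ≤ ν' ⬝ᵥ b := by
    obtain ⟨x₀, hx₀⟩ := hP
    simpa [dotProduct_mulVec, hν'A] using dotProduct_le_dotProduct_of_nonneg_left hx₀ hν'
  refine ⟨ν', fun i hi => by simp [ν', vecMul_diagonal, hi], ?_, fun t ht => ⟨?_, ?_⟩⟩
  · obtain ⟨i, -, hi⟩ := Finset.exists_lt_of_sum_lt (f := 0) (g := ν') (s := Finset.univ) <| by
      simpa [ν', vecMul_diagonal, dotProduct] using hνμ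
    exact ⟨i, hi⟩
  · rw [sub_vecMul, smul_vecMul, hν'A, smul_zero, sub_zero, hμA]
  · rw [sub_dotProduct, smul_dotProduct, smul_eq_mul]
    nlinarith

theorem sInf_le_hJL {L J : Set (Fin m)} (hJ : ASurj A J) {y : Fin m → ℝ}
    (hyL : ∀ i ∉ L, y i = 0) (hy : ‖y‖ ≤ 1) :
    sInf {r | ∃ x : Fin n → ℝ, (∀ i ∈ J, A.mulVec x i ≤ y i) ∧ r = ‖x‖} ≤ HJL A L J := by
  refine le_csSup ?_ ⟨y, hyL, hy, rfl⟩
  obtain ⟨x₁, hx₁⟩ := hJ fun _ => -1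
  refine ⟨‖x₁‖, ?_⟩
  rintro _ ⟨y', -, hy', rfl⟩
  refine csInf_le ⟨0, fun r ⟨x, _, hr⟩ => hr ▸ norm_nonneg x⟩ ⟨x₁, fun i hi => ?_, rfl⟩
  have : |y' i| ≤ 1 := (norm_le_pi_norm y' i).trans hy'
  linarith [hx₁ i hi, neg_abs_le (y' i)]

theorem hJL_le_hoffAL {L J : Set (Fin m)} (hJ : ASurj A J) : HJL A L J ≤ HoffAL A L :=
  le_csSup ((Set.finite_range (HJL A L)).subset (by rintro _ ⟨J, -, rfl⟩; exact ⟨J, rfl⟩)).bddAbove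
    ⟨J, hJ, rfl⟩

theorem hoffAL_nonneg (L : Set (Fin m)) : 0 ≤ HoffAL A L := by
  have hJ : ASurj A ∅ := fun _ => ⟨0, by simp⟩
  refine le_trans ?_ ((sInf_le_hJL A hJ (y := 0) (fun _ _ => rfl) (by simp)).trans
    (hJL_le_hoffAL A hJ))
  exact Real.sInf_nonneg fun r ⟨x, _, hr⟩ => hr ▸ norm_nonneg x

theorem dotProduct_le_hoffAL_mul_norm {L : Set (Fin m)} {μ : Fin m → ℝ} (hμ : 0 ≤ μ)
    (hJ : ASurj A {i | μ i ≠ 0}) (hdual : ∀ x, -‖x‖ ≤ μ ᵥ* A ⬝ᵥ x) {v : Fin m → ℝ}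
    (hvL : ∀ i ∉ L, v i = 0) : μ ⬝ᵥ v ≤ HoffAL A L * ‖v‖ := by
  set y := -‖v‖⁻¹ • v
  have hyL : ∀ i ∉ L, y i = 0 := fun i hi => by simp [y, hvL i hi]
  have hy : ‖y‖ ≤ 1 := by
    rw [norm_smul, norm_neg, norm_inv, norm_norm]
    exact inv_mul_le_one_of_le₀ le_rfl (norm_nonneg v)
  have hlow : -(μ ⬝ᵥ y) ≤ sInf {r | ∃ x : Fin n → ℝ,
      (∀ i ∈ {i | μ i ≠ 0}, A.mulVec x i ≤ y i) ∧ r = ‖x‖} := by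
    obtain ⟨x₀, hx₀⟩ := hJ y
    refine le_csInf ⟨_, x₀, hx₀, rfl⟩ ?_
    rintro _ ⟨x, hx, rfl⟩
    have : μ ⬝ᵥ (A *ᵥ x) ≤ μ ⬝ᵥ y := Finset.sum_le_sum fun i _ => by
      by_cases hi : μ i = 0
      · simp [hi]
      · exact mul_le_mul_of_nonneg_left (hx i hi) (hμ i)
    rw [dotProduct_mulVec] at this
    linarith [hdual x]
  have hv : μ ⬝ᵥ v = ‖v‖ * -(μ ⬝ᵥ y) := by
    rcases eq_or_ne v 0 with rfl | hv
    · simp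
    · simp [y, dotProduct_smul, norm_ne_zero_iff.2 hv]
  rw [hv, mul_comm]
  exact mul_le_mul_of_nonneg_right
    (hlow.trans ((sInf_le_hJL A hJ hyL hy).trans (hJL_le_hoffAL A hJ))) (norm_nonneg v)

theorem exists_multiplier_infDist_le (b : Fin m → ℝ) (hP : ∃ x, A *ᵥ x ≤ b) (u : Fin n → ℝ) :
    ∃ μ, 0 ≤ μ ∧ ASurj A {i | μ i ≠ 0} ∧ (∀ x, -‖x‖ ≤ μ ᵥ* A ⬝ᵥ x) ∧
      infDist u {x | A *ᵥ x ≤ b} ≤ μ ⬝ᵥ (A *ᵥ u - b) := by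
  have hconv : Convex ℝ {x | A *ᵥ x ≤ b} := (convex_Iic b).linear_preimage A.mulVecLin
  obtain ⟨f, hf1, hf⟩ := exists_norm_le_one_infDist_le hconv u
  obtain ⟨c, hfc⟩ : ∃ c, ∀ x, f x = c ⬝ᵥ x :=
    ⟨_, fun x => (f.apply_eq_dotProduct x).trans (dotProduct_comm _ _)⟩
  obtain ⟨μ₀, hμ₀, hμ₀A, hμ₀b⟩ := exists_nonneg_vecMul_eq_of_forall_dotProduct_le A b hP c
    (c ⬝ᵥ u - infDist u {x | A *ᵥ x ≤ b}) fun x hx => by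
      have := hf x hx
      rw [map_sub, hfc, hfc] at this
      linarith
  obtain ⟨μ, hμ, ⟨hμA, hμb⟩, hJ⟩ := exists_nonneg_vecMul_eq_aSurj_support A b hP hμ₀ hμ₀A hμ₀b
  refine ⟨μ, hμ, hJ, fun x => ?_, ?_⟩
  · rw [hμA, ← hfc]
    exact neg_le_of_abs_le ((f.le_opNorm x).trans (mul_le_of_le_one_left (norm_nonneg x) hf1))
  · rw [dotProduct_sub, dotProduct_mulVec, hμA]
    linarith

theorem infDist_le_hoffAL_mul_norm (L : Set (Fin m)) (b : Fin m → ℝ) (hP : ∃ x, A *ᵥ x ≤ b)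
    (u : Fin n → ℝ) {v : Fin m → ℝ} (hvL : ∀ i ∉ L, v i = 0) (huv : A *ᵥ u ≤ b + v) :
    infDist u {x | A *ᵥ x ≤ b} ≤ HoffAL A L * ‖v‖ := by
  obtain ⟨μ, hμ, hJ, hdual, hdist⟩ := exists_multiplier_infDist_le A b hP u
  calc infDist u {x | A *ᵥ x ≤ b} ≤ μ ⬝ᵥ (A *ᵥ u - b) := hdist
    _ ≤ μ ⬝ᵥ v := dotProduct_le_dotProduct_of_nonneg_left (sub_le_iff_le_add'.2 huv) hμ
    _ ≤ HoffAL A L * ‖v‖ := dotProduct_le_hoffAL_mul_norm A hμ hJ hdual hvL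

end Hoffman

/-- Proposition 3, bound part: for all `b` with `P_{A,b} ≠ ∅` and
all `u` with `A_{L^c} u ≤ b_{L^c}`,
`dist(u,P_{A,b}) ≤ H(A|L)·dist_L(b, Au + ℝ^m_+) ≤ H(A|L)·‖(A_L u − b_L)_+‖`. -/
theorem hoffman_ineq_bound_rest {m n : ℕ} (A : Matrix (Fin m) (Fin n) ℝ)
    (L : Set (Fin m)) (b : Fin m → ℝ)
    (hP : {x : Fin n → ℝ | ∀ i, A.mulVec x i ≤ b i}.Nonempty)
    (u : Fin n → ℝ) (hu : ∀ i ∉ L, A.mulVec u i ≤ b i) :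
    infDist u {x : Fin n → ℝ | ∀ i, A.mulVec x i ≤ b i} ≤
      HoffAL A L * distL L b
        {y : Fin m → ℝ | ∃ s : Fin m → ℝ, (∀ i, 0 ≤ s i) ∧ y = A.mulVec u + s} ∧
    HoffAL A L * distL L b
        {y : Fin m → ℝ | ∃ s : Fin m → ℝ, (∀ i, 0 ≤ s i) ∧ y = A.mulVec u + s} ≤
      HoffAL A L *
        ‖(fun i => if i ∈ L then max (A.mulVec u i - b i) 0 else 0 : Fin m → ℝ)‖ := by
  set T : Fin m → ℝ := fun i => if i ∈ L then max (A.mulVec u i - b i) 0 else 0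
  set R := {r | ∃ y ∈ {y : Fin m → ℝ | ∃ s : Fin m → ℝ, (∀ i, 0 ≤ s i) ∧ y = A.mulVec u + s},
    (∀ i ∉ L, b i - y i = 0) ∧ r = ‖b - y‖}
  have hH := hoffAL_nonneg A L
  have hT : ‖T‖ ∈ R := by
    refine ⟨b + T, ⟨b + T - A *ᵥ u, fun i => ?_, by abel⟩, fun i hi => by simp [T, hi], by simp⟩
    by_cases hi : i ∈ L
    · have := le_max_left (A.mulVec u i - b i) 0
      simp only [T, hi, if_true, Pi.sub_apply, Pi.add_apply]
      linarith
    · simpa [T, hi] using hu i hi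
  have hdist : sInf R ≤ ‖T‖ := csInf_le ⟨0, by rintro _ ⟨y, -, -, rfl⟩; exact norm_nonneg _⟩ hT
  refine ⟨?_, mul_le_mul_of_nonneg_left hdist hH⟩
  rw [distL, ← smul_eq_mul, ← Real.sInf_smul_of_nonneg hH]
  refine le_csInf (Set.Nonempty.smul_set ⟨_, hT⟩) ?_
  rintro _ ⟨_, ⟨y, ⟨s, hs, rfl⟩, hyL, rfl⟩, rfl⟩
  show _ ≤ HoffAL A L * _
  rw [norm_sub_rev]
  refine infDist_le_hoffAL_mul_norm A L b hP u (fun i hi => ?_) fun i => ?_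
  · rw [← neg_sub, Pi.neg_apply, Pi.sub_apply, hyL i hi, neg_zero]
  · simpa using hs i
end

section
/- Let A ∈ ℝ^{m×n} and L ⊆ {1,…,m}. If H(A|L) > 0, then there exist b ∈ ℝ^m with P_{A,b} := {x : Ax ≤ b} nonempty and u satisfying A_{L^c} u ≤ b_{L^c} but u ∉ P_{A,b}, such that dist(u, P_{A,b}) = H(A|L) · dist_L(b, Au + ℝ^m_+). -/
/-!
For an `A`-surjective `J`, the value `φ_J(y) = min {‖x‖ : A_J x ≤ y_J}` is attained, antitone,
positively homogeneous and subadditive in `y`. Hence on the subspace `V = {y : y_{L^c} = 0}` it is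
bounded by `H_J(A|L)‖y‖` and Lipschitz, so it attains `H_J(A|L)` at some `y ∈ V` with `‖y‖ ≤ 1`.
Take `J` attaining the finite maximum `H(A|L)`, a minimal-norm solution `x` of `A_J x ≤ y_J`,
`b = max(y, Ax)` and `u = 0`. Every `x' ∈ P_{A,b}` solves `A_J x' ≤ y_J`, so
`dist(0, P_{A,b}) = ‖x‖ = H(A|L)`; every admissible `z ≤ b` in `V` has `H(A|L) ≤ φ_J(z) ≤ H(A|L)‖z‖`,
so `dist_L(b, ℝ^m_+) = 1`, attained at `b - y`.
-/

open Matrix Metric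

section MinFeasNorm

variable {m n : ℕ} {A : Matrix (Fin m) (Fin n) ℝ} {J : Set (Fin m)} {y z : Fin m → ℝ}

/-- `HJL A L J` is by definition `sSup {t | ∃ y, … ∧ t = minFeasNorm A J y}`. -/
noncomputable def minFeasNorm (A : Matrix (Fin m) (Fin n) ℝ) (J : Set (Fin m))
    (y : Fin m → ℝ) : ℝ :=
  sInf {r | ∃ x : Fin n → ℝ, (∀ i ∈ J, A.mulVec x i ≤ y i) ∧ r = ‖x‖}

lemma minFeasNorm_le {x : Fin n → ℝ} (hx : ∀ i ∈ J, A.mulVec x i ≤ y i) :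
    minFeasNorm A J y ≤ ‖x‖ :=
  csInf_le ⟨0, by rintro _ ⟨x, -, rfl⟩; exact norm_nonneg x⟩ ⟨x, hx, rfl⟩

lemma isClosed_setOf_mulVec_le (A : Matrix (Fin m) (Fin n) ℝ) (J : Set (Fin m))
    (y : Fin m → ℝ) : IsClosed {x : Fin n → ℝ | ∀ i ∈ J, A.mulVec x i ≤ y i} := by
  simp only [Set.ofPred_forall]
  exact isClosed_iInter fun i => isClosed_iInter fun _ =>
    isClosed_le ((continuous_apply i).comp (Continuous.matrix_mulVec continuous_const continuous_id))
      continuous_const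

lemma exists_norm_eq_minFeasNorm (hJ : ASurj A J) (y : Fin m → ℝ) :
    ∃ x : Fin n → ℝ, (∀ i ∈ J, A.mulVec x i ≤ y i) ∧ ‖x‖ = minFeasNorm A J y := by
  obtain ⟨x₀, hx₀⟩ := hJ y
  obtain ⟨x, hx, hdist⟩ := (isClosed_setOf_mulVec_le A J y).exists_infDist_eq_dist ⟨x₀, hx₀⟩ 0
  refine ⟨x, hx, le_antisymm (le_csInf ⟨_, x, hx, rfl⟩ ?_) (minFeasNorm_le hx)⟩
  rintro _ ⟨x', hx', rfl⟩
  simpa [hdist] using infDist_le_dist_of_mem (x := 0)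
    (show x' ∈ {x : Fin n → ℝ | ∀ i ∈ J, A.mulVec x i ≤ y i} from hx')

lemma minFeasNorm_anti (hJ : ASurj A J) (h : ∀ i ∈ J, z i ≤ y i) :
    minFeasNorm A J y ≤ minFeasNorm A J z := by
  obtain ⟨x, hx, hxz⟩ := exists_norm_eq_minFeasNorm hJ z
  exact hxz ▸ minFeasNorm_le fun i hi => (hx i hi).trans (h i hi)

lemma minFeasNorm_smul_le (hJ : ASurj A J) {c : ℝ} (hc : 0 ≤ c) :
    minFeasNorm A J (c • y) ≤ c * minFeasNorm A J y := by
  obtain ⟨x, hx, hxy⟩ := exists_norm_eq_minFeasNorm hJ y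
  calc minFeasNorm A J (c • y) ≤ ‖c • x‖ := minFeasNorm_le fun i hi => by
        simpa [mulVec_smul] using mul_le_mul_of_nonneg_left (hx i hi) hc
    _ = c * minFeasNorm A J y := by rw [norm_smul, Real.norm_of_nonneg hc, hxy]

lemma minFeasNorm_add_le (hJ : ASurj A J) (y z : Fin m → ℝ) :
    minFeasNorm A J (y + z) ≤ minFeasNorm A J y + minFeasNorm A J z := by
  obtain ⟨xy, hxy, hxy'⟩ := exists_norm_eq_minFeasNorm hJ y
  obtain ⟨xz, hxz, hxz'⟩ := exists_norm_eq_minFeasNorm hJ z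
  calc minFeasNorm A J (y + z) ≤ ‖xy + xz‖ := minFeasNorm_le fun i hi => by
        simpa [mulVec_add] using add_le_add (hxy i hi) (hxz i hi)
    _ ≤ ‖xy‖ + ‖xz‖ := norm_add_le xy xz
    _ = _ := by rw [hxy', hxz']

lemma infDist_zero_eq_minFeasNorm {b : Fin m → ℝ} (hbJ : ∀ i ∈ J, b i ≤ y i) {x : Fin n → ℝ}
    (hx : ∀ i, A.mulVec x i ≤ b i) (hxy : ‖x‖ = minFeasNorm A J y) :
    infDist 0 {x : Fin n → ℝ | ∀ i, A.mulVec x i ≤ b i} = minFeasNorm A J y := by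
  refine le_antisymm ?_ ((le_infDist
    (⟨x, hx⟩ : {x : Fin n → ℝ | ∀ i, A.mulVec x i ≤ b i}.Nonempty)).2 fun x' hx' => ?_)
  · simpa [hxy] using infDist_le_dist_of_mem (x := 0)
      (show x ∈ {x : Fin n → ℝ | ∀ i, A.mulVec x i ≤ b i} from hx)
  · simpa using minFeasNorm_le fun i hi => (hx' i).trans (hbJ i hi)

end MinFeasNorm

section Hoffman

variable {m n : ℕ} {A : Matrix (Fin m) (Fin n) ℝ} {J L : Set (Fin m)} {y : Fin m → ℝ}

lemma exists_aSurj_hoffAL_eq_hJL (A : Matrix (Fin m) (Fin n) ℝ) (L : Set (Fin m)) :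
    ∃ J, ASurj A J ∧ HoffAL A L = HJL A L J := by
  have hne : {t | ∃ J, ASurj A J ∧ t = HJL A L J}.Nonempty :=
    ⟨_, ∅, fun _ => ⟨0, fun _ hi => hi.elim⟩, rfl⟩
  have hfin : {t | ∃ J, ASurj A J ∧ t = HJL A L J}.Finite :=
    (Set.finite_range fun J => HJL A L J).subset fun _ ⟨J, _, hJ⟩ => ⟨J, hJ.symm⟩
  exact hne.csSup_mem hfin

/-- Positivity rules out the junk value `sSup s = 0` of a set `s` unbounded above. -/
lemma minFeasNorm_le_hJL (hH : 0 < HJL A L J) (hyL : ∀ i ∉ L, y i = 0) (hy : ‖y‖ ≤ 1) :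
    minFeasNorm A J y ≤ HJL A L J := by
  refine le_csSup ?_ ⟨y, hyL, hy, rfl⟩
  by_contra hbdd
  exact hH.ne' (Real.sSup_of_not_bddAbove hbdd)

lemma minFeasNorm_le_hJL_mul_norm (hJ : ASurj A J) (hH : 0 < HJL A L J)
    (hyL : ∀ i ∉ L, y i = 0) : minFeasNorm A J y ≤ HJL A L J * ‖y‖ := by
  have hunit : minFeasNorm A J (‖y‖⁻¹ • y) ≤ HJL A L J :=
    minFeasNorm_le_hJL hH (fun i hi => by simp [hyL i hi]) <| by
      rw [norm_smul, norm_inv, norm_norm]; exact inv_mul_le_one_of_le₀ le_rfl (norm_nonneg y)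
  calc minFeasNorm A J y = minFeasNorm A J (‖y‖ • ‖y‖⁻¹ • y) := by
        rcases eq_or_ne y 0 with rfl | hy
        · simp
        · rw [smul_inv_smul₀ (norm_ne_zero_iff.2 hy)]
    _ ≤ ‖y‖ * minFeasNorm A J (‖y‖⁻¹ • y) := minFeasNorm_smul_le hJ (norm_nonneg y)
    _ ≤ HJL A L J * ‖y‖ := by rw [mul_comm]; gcongr

lemma lipschitzOnWith_minFeasNorm (hJ : ASurj A J) (hH : 0 < HJL A L J) :
    LipschitzOnWith (HJL A L J).toNNReal (minFeasNorm A J) {y | ∀ i ∉ L, y i = 0} := by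
  refine LipschitzOnWith.of_le_add_mul' _ fun a ha c hc => ?_
  calc minFeasNorm A J a = minFeasNorm A J (c + (a - c)) := by rw [add_sub_cancel]
    _ ≤ minFeasNorm A J c + minFeasNorm A J (a - c) := minFeasNorm_add_le hJ c (a - c)
    _ ≤ minFeasNorm A J c + HJL A L J * dist a c := by
        rw [dist_eq_norm]
        gcongr
        exact minFeasNorm_le_hJL_mul_norm hJ hH fun i hi => by simp [ha i hi, hc i hi]

lemma exists_minFeasNorm_eq_hJL (hJ : ASurj A J) (hH : 0 < HJL A L J) :
    ∃ y : Fin m → ℝ, (∀ i ∉ L, y i = 0) ∧ ‖y‖ ≤ 1 ∧ minFeasNorm A J y = HJL A L J := by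
  set V : Set (Fin m → ℝ) := {y | ∀ i ∉ L, y i = 0}
  have hV : IsClosed V := by
    simp only [V, Set.ofPred_forall]
    exact isClosed_iInter fun i => isClosed_iInter fun _ =>
      isClosed_eq (continuous_apply i) continuous_const
  obtain ⟨y, ⟨hyL, hy⟩, hmax⟩ := ((isCompact_closedBall 0 1).inter_left hV).exists_isMaxOn
    ⟨0, fun _ _ => rfl, mem_closedBall_self zero_le_one⟩
    ((lipschitzOnWith_minFeasNorm hJ hH).continuousOn.mono Set.inter_subset_left)
  rw [mem_closedBall_zero_iff] at hy
  refine ⟨y, hyL, hy, le_antisymm (minFeasNorm_le_hJL hH hyL hy) ?_⟩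
  refine csSup_le ⟨_, 0, fun _ _ => rfl, by simp, rfl⟩ ?_
  rintro _ ⟨z, hzL, hz, rfl⟩
  exact hmax ⟨hzL, mem_closedBall_zero_iff.2 hz⟩

lemma distL_eq_one (hJ : ASurj A J) (hH : 0 < HJL A L J) {b : Fin m → ℝ} {u : Fin n → ℝ}
    (hyL : ∀ i ∉ L, y i = 0) (hy : ‖y‖ ≤ 1) (hyH : minFeasNorm A J y = HJL A L J)
    (hyb : ∀ i, y i ≤ b i - A.mulVec u i) (hbJ : ∀ i ∈ J, b i - A.mulVec u i ≤ y i) :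
    distL L b {w | ∃ s : Fin m → ℝ, (∀ i, 0 ≤ s i) ∧ w = A.mulVec u + s} = 1 := by
  have hmem : ‖y‖ ∈ {r | ∃ w ∈ {w | ∃ s : Fin m → ℝ, (∀ i, 0 ≤ s i) ∧ w = A.mulVec u + s},
      (∀ i ∉ L, b i - w i = 0) ∧ r = ‖b - w‖} := by
    refine ⟨A.mulVec u + (b - A.mulVec u - y), ⟨_, fun i => sub_nonneg.2 (hyb i), rfl⟩, ?_, ?_⟩
    · intro i hi
      simp [hyL i hi]
    · rw [show b - (A.mulVec u + (b - A.mulVec u - y)) = y by abel]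
  refine le_antisymm ((csInf_le ⟨0, ?_⟩ hmem).trans hy) (le_csInf ⟨_, hmem⟩ ?_)
  · rintro _ ⟨w, -, -, rfl⟩
    exact norm_nonneg _
  rintro _ ⟨_, ⟨s, hs, rfl⟩, hzL, rfl⟩
  -- `z = b - (Au + s)` lies below `y` on `J`, so `H ≤ φ_J(z) ≤ H‖z‖`.
  have hzJ : ∀ i ∈ J, (b - (A.mulVec u + s)) i ≤ y i := fun i hi => by
    simp only [Pi.sub_apply, Pi.add_apply]
    linarith [hs i, hbJ i hi]
  have hHz := (minFeasNorm_anti hJ hzJ).trans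
    (minFeasNorm_le_hJL_mul_norm (y := b - (A.mulVec u + s)) hJ hH hzL)
  rw [hyH] at hHz
  exact le_of_mul_le_mul_left (by rwa [mul_one]) hH

end Hoffman

/-- Proposition 3, tightness: if `H(A|L) > 0` then there exist
`b` with `P_{A,b} ≠ ∅` and `u` with `A_{L^c} u ≤ b_{L^c}` but `u ∉ P_{A,b}`
such that `dist(u, P_{A,b}) = H(A|L)·dist_L(b, Au + ℝ^m_+)`. -/
theorem hoffman_ineq_tight_rest {m n : ℕ} (A : Matrix (Fin m) (Fin n) ℝ)
    (L : Set (Fin m)) (hH : 0 < HoffAL A L) :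
    ∃ b : Fin m → ℝ, {x : Fin n → ℝ | ∀ i, A.mulVec x i ≤ b i}.Nonempty ∧
      ∃ u : Fin n → ℝ, (∀ i ∉ L, A.mulVec u i ≤ b i) ∧
        u ∉ {x : Fin n → ℝ | ∀ i, A.mulVec x i ≤ b i} ∧
        infDist u {x : Fin n → ℝ | ∀ i, A.mulVec x i ≤ b i} =
          HoffAL A L * distL L b
            {y : Fin m → ℝ | ∃ s : Fin m → ℝ, (∀ i, 0 ≤ s i) ∧ y = A.mulVec u + s} := by
  obtain ⟨J, hJ, hHJ⟩ := exists_aSurj_hoffAL_eq_hJL A L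
  rw [hHJ] at hH ⊢
  obtain ⟨y, hyL, hy, hyH⟩ := exists_minFeasNorm_eq_hJL hJ hH
  obtain ⟨x, hx, hxy⟩ := exists_norm_eq_minFeasNorm hJ y
  set b := y ⊔ A.mulVec x
  have hbJ : ∀ i ∈ J, b i = y i := fun i hi => sup_eq_left.2 (hx i hi)
  have hxb : ∀ i, A.mulVec x i ≤ b i := fun i => le_sup_right
  refine ⟨b, ⟨x, hxb⟩, 0, fun i hi => ?_, fun h0 => ?_, ?_⟩
  · rw [mulVec_zero, Pi.zero_apply, ← hyL i hi]
    exact le_sup_left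
  · have h0y := minFeasNorm_le fun i hi => (h0 i).trans (hbJ i hi).le
    rw [hyH, norm_zero] at h0y
    exact h0y.not_gt hH
  · rw [infDist_zero_eq_minFeasNorm (fun i hi => (hbJ i hi).le) hxb hxy,
      distL_eq_one hJ hH hyL hy hyH (fun i => by simp [b]) (fun i hi => by simp [hbJ i hi]),
      hyH, mul_one]
end
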